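/- arXiv:0903.3780 — 5 statements merged into one kernel-verified Lean document; each statement's English description precedes it below -/
import Mathlib

section
/- Let γ be the Gauss measure on ℝⁿ, dγ(x) = π^{-n/2} e^{-|x|²} dx, and a > 0. There exist positive constants c₁, c₂ (depending only on n and a) such that for every ball B ∈ 𝓑_a (i.e. r_B ≤ a·m(c_B)), c₁ e^{-|c_B|²} |B| ≤ γ(B) ≤ c₂ e^{-|c_B|²} |B|, where |B| is the Lebesgue measure of B. -/
open MeasureTheory Metric Real

/-- `m(x) = min{1, 1/|x|}`. -/
noncomputable def mfun {n : ℕ} (x : EuclideanSpace ℝ (Fin n)) : ℝ := min 1 ‖x‖⁻¹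

/-- The Gauss measure `dγ(x) = π^{-n/2} e^{-|x|²} dx` on `ℝⁿ`. -/
noncomputable def gauss (n : ℕ) : Measure (EuclideanSpace ℝ (Fin n)) :=
  volume.withDensity fun x => ENNReal.ofReal (Real.pi ^ (-(n : ℝ) / 2) * Real.exp (-‖x‖ ^ 2))

theorem stmt2 (n : ℕ) (a : ℝ) (ha : 0 < a) :
    ∃ c₁ c₂ : ℝ, 0 < c₁ ∧ 0 < c₂ ∧
      ∀ (c : EuclideanSpace ℝ (Fin n)) (r : ℝ), 0 < r → r ≤ a * mfun c →
        c₁ * Real.exp (-‖c‖ ^ 2) * (volume (ball c r)).toReal ≤ (gauss n (ball c r)).toReal ∧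
        (gauss n (ball c r)).toReal ≤ c₂ * Real.exp (-‖c‖ ^ 2) * (volume (ball c r)).toReal := by
  have hpi : (0:ℝ) < Real.pi ^ (-(n : ℝ) / 2) := Real.rpow_pos_of_pos Real.pi_pos _
  set K : ℝ := 2 * a + a ^ 2 with hKdef
  refine ⟨Real.pi ^ (-(n : ℝ) / 2) * Real.exp (-K), Real.pi ^ (-(n : ℝ) / 2) * Real.exp K,
    by positivity, by positivity, ?_⟩
  intro c r hr hra
  have hm1 : mfun c ≤ 1 := min_le_left _ _
  have hrle : r ≤ a := hra.trans (by nlinarith)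
  have hrc : r * ‖c‖ ≤ a := by
    rcases eq_or_lt_of_le (norm_nonneg c) with h0 | h0
    · rw [← h0]; simpa using ha.le
    · have : mfun c ≤ ‖c‖⁻¹ := min_le_right _ _
      have h2 : r ≤ a * ‖c‖⁻¹ := hra.trans (by nlinarith)
      calc r * ‖c‖ ≤ a * ‖c‖⁻¹ * ‖c‖ := by nlinarith
        _ = a := by field_simp
  -- pointwise bounds on ‖x‖² for x in the ball
  have hpt : ∀ x ∈ ball c r, ‖c‖ ^ 2 - K ≤ ‖x‖ ^ 2 ∧ ‖x‖ ^ 2 ≤ ‖c‖ ^ 2 + K := by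
    intro x hx
    have hd : ‖x - c‖ < r := by simpa [dist_eq_norm] using mem_ball.mp hx
    have habs : |‖x‖ - ‖c‖| ≤ r := (abs_norm_sub_norm_le x c).trans hd.le
    have h1 : -r ≤ ‖x‖ - ‖c‖ := (abs_le.mp habs).1
    have h2 : ‖x‖ - ‖c‖ ≤ r := (abs_le.mp habs).2
    have hxn := norm_nonneg x
    have hcn := norm_nonneg c
    constructor
    · nlinarith [mul_nonneg hr.le hxn]
    · nlinarith
  have hmeas : Measurable fun x : EuclideanSpace ℝ (Fin n) =>
      ENNReal.ofReal (Real.pi ^ (-(n : ℝ) / 2) * Real.exp (-‖x‖ ^ 2)) := by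
    apply Measurable.ennreal_ofReal
    exact (continuous_const.mul ((continuous_norm.pow 2).neg.rexp)).measurable
  have hg : gauss n (ball c r)
      = ∫⁻ x in ball c r,
          ENNReal.ofReal (Real.pi ^ (-(n : ℝ) / 2) * Real.exp (-‖x‖ ^ 2)) ∂volume :=
    withDensity_apply _ measurableSet_ball
  set CU : ℝ := Real.pi ^ (-(n : ℝ) / 2) * Real.exp K * Real.exp (-‖c‖ ^ 2) with hCU
  set CL : ℝ := Real.pi ^ (-(n : ℝ) / 2) * Real.exp (-K) * Real.exp (-‖c‖ ^ 2) with hCL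
  have hCU0 : 0 ≤ CU := by positivity
  have hCL0 : 0 ≤ CL := by positivity
  have hub : gauss n (ball c r) ≤ ENNReal.ofReal CU * volume (ball c r) := by
    rw [hg, ← setLIntegral_const]
    refine setLIntegral_mono measurable_const fun x hx => ?_
    refine ENNReal.ofReal_le_ofReal ?_
    have := (hpt x hx).1
    have : Real.exp (-‖x‖ ^ 2) ≤ Real.exp K * Real.exp (-‖c‖ ^ 2) := by
      rw [← Real.exp_add]
      exact Real.exp_le_exp.mpr (by linarith)
    rw [hCU, mul_assoc]
    exact mul_le_mul_of_nonneg_left this hpi.le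
  have hlb : ENNReal.ofReal CL * volume (ball c r) ≤ gauss n (ball c r) := by
    rw [hg, ← setLIntegral_const]
    refine setLIntegral_mono hmeas fun x hx => ?_
    refine ENNReal.ofReal_le_ofReal ?_
    have := (hpt x hx).2
    have : Real.exp (-K) * Real.exp (-‖c‖ ^ 2) ≤ Real.exp (-‖x‖ ^ 2) := by
      rw [← Real.exp_add]
      exact Real.exp_le_exp.mpr (by linarith)
    rw [hCL, mul_assoc]
    exact mul_le_mul_of_nonneg_left this hpi.le
  have hvolfin : volume (ball c r) ≠ ⊤ := (measure_ball_lt_top).ne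
  have hubfin : ENNReal.ofReal CU * volume (ball c r) ≠ ⊤ :=
    ENNReal.mul_ne_top ENNReal.ofReal_ne_top hvolfin
  have hgfin : gauss n (ball c r) ≠ ⊤ := (lt_of_le_of_lt hub hubfin.lt_top).ne
  constructor
  · have := ENNReal.toReal_mono hgfin hlb
    rw [ENNReal.toReal_mul, ENNReal.toReal_ofReal hCL0] at this
    calc Real.pi ^ (-(n : ℝ) / 2) * Real.exp (-K) * Real.exp (-‖c‖ ^ 2)
          * (volume (ball c r)).toReal
        = CL * (volume (ball c r)).toReal := by rw [hCL]
      _ ≤ _ := this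
  · have := ENNReal.toReal_mono hubfin hub
    rw [ENNReal.toReal_mul, ENNReal.toReal_ofReal hCU0] at this
    calc (gauss n (ball c r)).toReal ≤ CU * (volume (ball c r)).toReal := this
      _ = Real.pi ^ (-(n : ℝ) / 2) * Real.exp K * Real.exp (-‖c‖ ^ 2)
          * (volume (ball c r)).toReal := by rw [hCU]
end

section
/- Let a, τ > 0 and let γ be the Gauss measure on ℝⁿ. For any ball B ∈ 𝓑_a, let B*_τ be the union of all balls B' that intersect B and satisfy r_{B'} ≤ τ r_B. Then γ(B*_τ) ≤ (2τ+1)ⁿ e^{4a(τ+1) + a²} γ(B). -/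
open MeasureTheory Metric Real

/-!
Every ball meeting `B = B(c, r)` with radius at most `τ r` lies in `B(c, (2τ + 1) r)`. On that
ball the Gauss density is at most `e^{2|c|(2τ+1)r - |c|²}`, while on `B` it is at least
`e^{-(|c|+r)²}`; the Lebesgue volumes differ by the factor `(2τ+1)ⁿ`. Admissibility gives
`r ≤ a` and `|c| r ≤ a`, which bounds the ratio of the two densities by `e^{4a(τ+1) + a²}`.
-/

section WithDensity

variable {α : Type*} [MeasurableSpace α] {μ : Measure α} {f : α → ENNReal} {s : Set α}

theorem withDensity_apply_le_mul_of_le (hs : MeasurableSet s) {M : ENNReal}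
    (hf : ∀ x ∈ s, f x ≤ M) : μ.withDensity f s ≤ M * μ s := by
  rw [withDensity_apply _ hs, ← setLIntegral_const]
  exact setLIntegral_mono' hs hf

theorem mul_le_withDensity_apply_of_le (hs : MeasurableSet s) {m : ENNReal}
    (hf : ∀ x ∈ s, m ≤ f x) : m * μ s ≤ μ.withDensity f s := by
  rw [withDensity_apply _ hs, ← setLIntegral_const]
  exact setLIntegral_mono' hs hf

end WithDensity

theorem setOf_mem_ball_of_inter_nonempty_subset_ball {α : Type*} [PseudoMetricSpace α]
    (x : α) (r ρ : ℝ) :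
    {y | ∃ (c' : α) (r' : ℝ), 0 < r' ∧ r' ≤ ρ ∧ (ball c' r' ∩ ball x r).Nonempty ∧
      y ∈ ball c' r'} ⊆ ball x (2 * ρ + r) := by
  rintro y ⟨c', r', -, hr'ρ, ⟨z, hzc', hzx⟩, hy⟩
  rw [mem_ball] at *
  calc dist y x ≤ dist y c' + dist z c' + dist z x := by
        linarith [dist_triangle y c' z, dist_triangle y z x, dist_comm c' z]
    _ < 2 * ρ + r := by linarith

section Admissible

variable {n : ℕ} {c : EuclideanSpace ℝ (Fin n)} {a r : ℝ}

theorem le_of_le_mul_mfun (ha : 0 ≤ a) (hr : r ≤ a * mfun c) : r ≤ a :=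
  hr.trans (mul_le_of_le_one_right ha (min_le_left _ _))

theorem norm_mul_le_of_le_mul_mfun (ha : 0 ≤ a) (hr : r ≤ a * mfun c) : ‖c‖ * r ≤ a :=
  calc ‖c‖ * r ≤ ‖c‖ * (a * ‖c‖⁻¹) :=
        mul_le_mul_of_nonneg_left (hr.trans (mul_le_mul_of_nonneg_left (min_le_right _ _) ha))
          (norm_nonneg c)
    _ = a * (‖c‖ * ‖c‖⁻¹) := by ring
    _ ≤ a := mul_le_of_le_one_right ha mul_inv_le_one

end Admissible

section GaussBall

variable {n : ℕ}

theorem gauss_ball_le (c : EuclideanSpace ℝ (Fin n)) (R : ℝ) :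
    gauss n (ball c R) ≤
      ENNReal.ofReal (π ^ (-(n : ℝ) / 2) * exp (2 * ‖c‖ * R - ‖c‖ ^ 2)) * volume (ball c R) := by
  refine withDensity_apply_le_mul_of_le measurableSet_ball fun y hy => ?_
  have hcy : ‖c‖ < ‖y‖ + R := norm_lt_of_mem_ball (mem_ball_comm.1 hy)
  have hc := norm_nonneg c
  have hy := norm_nonneg y
  gcongr
  -- `t ↦ t² - 2tR` is nonpositive on `[0, R]` and increasing on `[R, ∞)`
  rcases le_total R ‖c‖ with hcR | hcR
  · nlinarith [mul_self_le_mul_self (sub_nonneg.2 hcR) (by linarith : ‖c‖ - R ≤ ‖y‖), sq_nonneg R]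
  · nlinarith [mul_nonneg hc (sub_nonneg.2 hcR)]

theorem le_gauss_ball (c : EuclideanSpace ℝ (Fin n)) (r : ℝ) :
    ENNReal.ofReal (π ^ (-(n : ℝ) / 2) * exp (-(‖c‖ + r) ^ 2)) * volume (ball c r) ≤
      gauss n (ball c r) := by
  refine mul_le_withDensity_apply_of_le measurableSet_ball fun y hy => ?_
  have hyc : ‖y‖ < ‖c‖ + r := norm_lt_of_mem_ball hy
  gcongr

theorem gauss_ball_mul_le (c : EuclideanSpace ℝ (Fin n)) {k : ℝ} (hk : 0 < k) (r : ℝ) :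
    gauss n (ball c (k * r)) ≤
      ENNReal.ofReal (k ^ n * exp (2 * ‖c‖ * (k * r) - ‖c‖ ^ 2 + (‖c‖ + r) ^ 2)) *
        gauss n (ball c r) := by
  set P := π ^ (-(n : ℝ) / 2)
  have hvol : volume (ball c (k * r)) = ENNReal.ofReal (k ^ n) * volume (ball c r) := by
    rw [Measure.addHaar_ball_mul_of_pos _ c hk, Measure.addHaar_ball_center _ c r,
      finrank_euclideanSpace_fin]
  calc _ ≤ ENNReal.ofReal (P * exp (2 * ‖c‖ * (k * r) - ‖c‖ ^ 2)) * volume (ball c (k * r)) :=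
        gauss_ball_le c _
    _ = ENNReal.ofReal (k ^ n * exp (2 * ‖c‖ * (k * r) - ‖c‖ ^ 2 + (‖c‖ + r) ^ 2)) *
          (ENNReal.ofReal (P * exp (-(‖c‖ + r) ^ 2)) * volume (ball c r)) := by
        rw [hvol, ← mul_assoc (ENNReal.ofReal _), ← mul_assoc (ENNReal.ofReal _),
          ← ENNReal.ofReal_mul (by positivity), ← ENNReal.ofReal_mul (by positivity), exp_add,
          exp_neg]
        congr 2
        field_simp
    _ ≤ _ := by
        gcongr
        exact le_gauss_ball c r

end GaussBall

theorem gauss_exponent_le {a τ r t : ℝ} (hτ : 0 ≤ τ + 1) (hr0 : 0 ≤ r) (hra : r ≤ a)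
    (htr : t * r ≤ a) :
    2 * t * ((2 * τ + 1) * r) - t ^ 2 + (t + r) ^ 2 ≤ 4 * a * (τ + 1) + a ^ 2 := by
  nlinarith [mul_le_mul_of_nonneg_left htr hτ, mul_self_le_mul_self hr0 hra]

theorem stmt3 (n : ℕ) (a τ : ℝ) (ha : 0 < a) (hτ : 0 < τ)
    (c : EuclideanSpace ℝ (Fin n)) (r : ℝ) (hr0 : 0 < r) (hr : r ≤ a * mfun c) :
    gauss n {y | ∃ (c' : EuclideanSpace ℝ (Fin n)) (r' : ℝ), 0 < r' ∧ r' ≤ τ * r ∧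
        (ball c' r' ∩ ball c r).Nonempty ∧ y ∈ ball c' r'} ≤
      ENNReal.ofReal ((2 * τ + 1) ^ n * Real.exp (4 * a * (τ + 1) + a ^ 2)) *
        gauss n (ball c r) := by
  have hexp := gauss_exponent_le (τ := τ) (t := ‖c‖) (by linarith) hr0.le
    (le_of_le_mul_mfun ha.le hr) (norm_mul_le_of_le_mul_mfun ha.le hr)
  calc _ ≤ gauss n (ball c ((2 * τ + 1) * r)) := measure_mono <|
        (setOf_mem_ball_of_inter_nonempty_subset_ball c r (τ * r)).trans_eq (by ring_nf)
    _ ≤ _ := gauss_ball_mul_le c (by positivity) r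
    _ ≤ _ := by gcongr
end

section
/- Let γ be the Gauss measure on ℝⁿ, a > 0, β ∈ (0,1). With I_a^β as above, there is a constant C such that for all f ∈ L¹(γ) and λ > 0, γ({x : |I_a^β(|f|)(x)| > λ}) ≤ C (‖f‖_{L¹(γ)}/λ)^{1/(1-β)}; i.e. I_a^β is bounded from L¹(γ) to weak L^{1/(1-β)}(γ). -/
open MeasureTheory Metric Real ENNReal

/-- The local fractional integral of `|f|`:
`I_a^β(|f|)(x) = ∫_{B(x, a m(x))} |f(y)| / V(x,y)^{1-β} dγ(y)`, with
`V(x,y) = γ(B(x,|x-y|))`. -/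
noncomputable def fracInt (n : ℕ) (a β : ℝ) (f : EuclideanSpace ℝ (Fin n) → ℝ)
    (x : EuclideanSpace ℝ (Fin n)) : ℝ≥0∞ :=
  ∫⁻ y in ball x (a * mfun x),
    ‖f y‖₊ * gauss n (ball x (dist x y)) ^ (β - 1) ∂gauss n

/-!
Split the kernel at the level `V(x,y) = s`. Where `V > s` it is at most `s^(β-1)`, which
contributes at most `s^(β-1) ‖f‖₁` pointwise. For the part with `V ≤ s`, Tonelli reduces matters
to the fibres in `x` for fixed `y`: on the admissible region `|x - y| < a m(x)` one has
`m(x) ≲ m(y)` and the Gaussian density is comparable to its value at `y`, so balls of radius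
`≲ m(y)` have measure `≈ e^{-|y|²} rⁿ`, whence `γ{x : V(x,y) ≤ t} ≲ t`. A dyadic decomposition in
`V` then gives `∫_{V(·,y) ≤ s} V(x,y)^(β-1) dγ(x) ≲ s^β`, and Chebyshev yields
`γ{I > λ} ≲ s^β ‖f‖₁ / λ`. Choosing `s` with `s^(β-1) ‖f‖₁ = λ/2` gives `(‖f‖₁/λ)^(1/(1-β))`.
-/

theorem ENNReal.rpow_le_rpow_of_nonpos {x y : ℝ≥0∞} {z : ℝ} (hxy : x ≤ y) (hz : z ≤ 0) :
    y ^ z ≤ x ^ z := by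
  obtain ⟨w, rfl⟩ : ∃ w, z = -w := ⟨-z, by ring⟩
  rw [ENNReal.rpow_neg, ENNReal.rpow_neg]
  exact ENNReal.inv_le_inv.2 (ENNReal.rpow_le_rpow hxy (neg_nonpos.1 hz))

namespace GaussFracInt

lemma exists_dyadic_layer {v s : ℝ≥0∞} (hv : v ≠ 0) (hvs : v ≤ s) (hs : s ≠ ∞) :
    ∃ k : ℕ, s * 2⁻¹ ^ (k + 1) < v ∧ v ≤ s * 2⁻¹ ^ k := by
  by_contra! h
  have hle : ∀ k : ℕ, v ≤ s * 2⁻¹ ^ k := by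
    intro k
    induction k with
    | zero => simpa using hvs
    | succ k ih => exact not_lt.1 fun hlt => (h k hlt).not_ge ih
  obtain ⟨k, hk⟩ := ENNReal.exists_inv_two_pow_lt (ENNReal.div_ne_zero.2 ⟨hv, hs⟩)
  rw [ENNReal.lt_div_iff_mul_lt (.inl (ne_bot_of_le_ne_bot hv hvs)) (.inl hs), mul_comm] at hk
  exact (hle k).not_gt hk

lemma dyadic_rpow_sub_one_mul {s : ℝ≥0∞} (hs0 : s ≠ 0) (hs : s ≠ ∞) (β : ℝ) (k : ℕ) :
    (s * 2⁻¹ ^ (k + 1)) ^ (β - 1) * (s * 2⁻¹ ^ k) = 2⁻¹ ^ (β - 1) * (2⁻¹ ^ β) ^ k * s ^ β := by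
  have h2 : (2⁻¹ : ℝ≥0∞) ≠ 0 := by simp
  have h2' : (2⁻¹ : ℝ≥0∞) ≠ ∞ := by simp
  simp only [← ENNReal.rpow_natCast, ← ENNReal.rpow_mul]
  rw [ENNReal.mul_rpow_of_ne_top hs (ENNReal.rpow_ne_top_of_ne_zero h2 h2'), ← ENNReal.rpow_mul]
  calc s ^ (β - 1) * 2⁻¹ ^ (((k + 1 : ℕ) : ℝ) * (β - 1)) * (s * 2⁻¹ ^ (k : ℝ))
      = 2⁻¹ ^ (((k + 1 : ℕ) : ℝ) * (β - 1)) * 2⁻¹ ^ (k : ℝ) * (s ^ (β - 1) * s ^ (1 : ℝ)) := by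
        rw [ENNReal.rpow_one]; ring
    _ = 2⁻¹ ^ (β - 1) * 2⁻¹ ^ (β * k) * s ^ β := by
        rw [← ENNReal.rpow_add _ _ h2 h2', ← ENNReal.rpow_add _ _ hs0 hs,
          ← ENNReal.rpow_add _ _ h2 h2']
        push_cast
        ring_nf

/-- The sum over `k` of the right-hand side of `dyadic_rpow_sub_one_mul`, divided by `s ^ β`. -/
noncomputable def layerConst (β : ℝ) : ℝ≥0∞ := 2⁻¹ ^ (β - 1) * (1 - 2⁻¹ ^ β)⁻¹

lemma layerConst_ne_zero (β : ℝ) : layerConst β ≠ 0 :=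
  mul_ne_zero (ENNReal.rpow_pos (by simp) (by simp)).ne'
    (ENNReal.inv_ne_zero.2 (ENNReal.sub_ne_top one_ne_top))

lemma layerConst_ne_top {β : ℝ} (hβ : 0 < β) : layerConst β ≠ ∞ :=
  ENNReal.mul_ne_top (ENNReal.rpow_ne_top_of_ne_zero (by simp) (by simp))
    (ENNReal.inv_ne_top.2 (tsub_pos_of_lt (ENNReal.rpow_lt_one (by norm_num) hβ)).ne')

lemma rpow_one_div_one_sub_rpow_sub_one (u : ℝ≥0∞) {β : ℝ} (hβ : β < 1) :
    (u ^ (1 / (1 - β))) ^ (β - 1) = u⁻¹ := by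
  rw [← ENNReal.rpow_mul, ← ENNReal.rpow_neg_one]
  congr 1
  field_simp [(sub_pos.2 hβ).ne']
  ring

lemma rpow_one_div_one_sub_rpow_mul_self {u : ℝ≥0∞} (hu0 : u ≠ 0) (hu : u ≠ ∞) {β : ℝ}
    (hβ : β < 1) : (u ^ (1 / (1 - β))) ^ β * u = u ^ (1 / (1 - β)) := by
  rw [← ENNReal.rpow_mul]
  nth_rewrite 2 [← ENNReal.rpow_one u]
  rw [← ENNReal.rpow_add _ _ hu0 hu]
  congr 1
  field_simp [(sub_pos.2 hβ).ne']
  ring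

section KernelOperator

variable {X : Type*} [MeasurableSpace X] {μ : Measure X} {E : Set (X × X)} {V : X × X → ℝ≥0∞}
  {β : ℝ} {g : X → ℝ≥0∞}

theorem setLIntegral_rpow_sub_one_le {f : X → ℝ≥0∞} {K : ℝ≥0∞}
    (hK : ∀ t, μ {x | f x ≤ t} ≤ K * t) (hβ : β ≤ 1) {s : ℝ≥0∞} (hs0 : s ≠ 0) (hs : s ≠ ∞) :
    ∫⁻ x in {x | f x ≤ s}, f x ^ (β - 1) ∂μ ≤ K * layerConst β * s ^ β := by
  set T : ℕ → ℝ≥0∞ := fun k => s * 2⁻¹ ^ k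
  have hcover : {x | f x ≤ s} ⊆ {x | f x ≤ 0} ∪ ⋃ k, {x | T (k + 1) < f x ∧ f x ≤ T k} := by
    intro x (hx : f x ≤ s)
    rcases eq_or_ne (f x) 0 with h0 | h0
    · exact .inl h0.le
    · exact .inr (Set.mem_iUnion.2 (exists_dyadic_layer h0 hx hs))
  have hnull : μ {x | f x ≤ 0} = 0 := le_zero_iff.1 (by simpa using hK 0)
  calc ∫⁻ x in {x | f x ≤ s}, f x ^ (β - 1) ∂μ
      ≤ ∫⁻ x in ⋃ k, {x | T (k + 1) < f x ∧ f x ≤ T k}, f x ^ (β - 1) ∂μ := by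
        refine (lintegral_mono_set hcover).trans ((lintegral_union_le _ _ _).trans ?_)
        rw [setLIntegral_measure_zero _ _ hnull, zero_add]
    _ ≤ ∑' k, ∫⁻ x in {x | T (k + 1) < f x ∧ f x ≤ T k}, f x ^ (β - 1) ∂μ :=
        lintegral_iUnion_le _ _
    _ ≤ ∑' k, T (k + 1) ^ (β - 1) * (K * T k) := by
        refine ENNReal.tsum_le_tsum fun k => ?_
        calc ∫⁻ x in {x | T (k + 1) < f x ∧ f x ≤ T k}, f x ^ (β - 1) ∂μ
            ≤ ∫⁻ _ in {x | T (k + 1) < f x ∧ f x ≤ T k}, T (k + 1) ^ (β - 1) ∂μ :=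
              setLIntegral_mono measurable_const fun x hx =>
                ENNReal.rpow_le_rpow_of_nonpos hx.1.le (by linarith)
          _ ≤ T (k + 1) ^ (β - 1) * (K * T k) := by
              rw [setLIntegral_const]
              exact mul_le_mul_right ((measure_mono fun x hx => hx.2).trans (hK _)) _
    _ = K * layerConst β * s ^ β := by
        simp only [T, mul_left_comm _ K, dyadic_rpow_sub_one_mul hs0 hs, ENNReal.tsum_mul_left,
          ENNReal.tsum_mul_right, ENNReal.tsum_geometric, layerConst]
        ring

noncomputable def kernelOp (μ : Measure X) (E : Set (X × X)) (V : X × X → ℝ≥0∞) (β : ℝ)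
    (g : X → ℝ≥0∞) (x : X) : ℝ≥0∞ :=
  ∫⁻ y in Prod.mk x ⁻¹' E, g y * V (x, y) ^ (β - 1) ∂μ

lemma kernelOp_eq_lintegral_indicator (hE : MeasurableSet E) (x : X) :
    kernelOp μ E V β g x = ∫⁻ y, E.indicator (fun p => g p.2 * V p ^ (β - 1)) (x, y) ∂μ := by
  rw [kernelOp, ← lintegral_indicator (measurable_prodMk_left hE)]
  rfl

lemma kernelOp_le_kernelOp_inter_add (hV : Measurable V) (hg : AEMeasurable g μ) (hβ : β ≤ 1)
    (s : ℝ≥0∞) (x : X) :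
    kernelOp μ E V β g x ≤
      kernelOp μ (E ∩ {p | V p ≤ s}) V β g x + s ^ (β - 1) * ∫⁻ y, g y ∂μ := by
  have hcover : Prod.mk x ⁻¹' E ⊆ Prod.mk x ⁻¹' (E ∩ {p | V p ≤ s}) ∪ {y | s < V (x, y)} := by
    intro y hy
    by_cases hVs : V (x, y) ≤ s
    · exact .inl ⟨hy, hVs⟩
    · exact .inr (not_le.1 hVs)
  calc kernelOp μ E V β g x
      ≤ kernelOp μ (E ∩ {p | V p ≤ s}) V β g x +
          ∫⁻ y in {y | s < V (x, y)}, g y * V (x, y) ^ (β - 1) ∂μ :=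
        (lintegral_mono_set hcover).trans (lintegral_union_le _ _ _)
    _ ≤ kernelOp μ (E ∩ {p | V p ≤ s}) V β g x + s ^ (β - 1) * ∫⁻ y, g y ∂μ := by
        gcongr
        calc ∫⁻ y in {y | s < V (x, y)}, g y * V (x, y) ^ (β - 1) ∂μ
            ≤ ∫⁻ y in {y | s < V (x, y)}, g y * s ^ (β - 1) ∂μ :=
              setLIntegral_mono'
                (measurableSet_lt measurable_const (hV.comp measurable_prodMk_left))
                fun y hy => mul_le_mul_right (ENNReal.rpow_le_rpow_of_nonpos (le_of_lt hy)
                  (by linarith)) _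
          _ ≤ ∫⁻ y, g y * s ^ (β - 1) ∂μ := setLIntegral_le_lintegral _ _
          _ = s ^ (β - 1) * ∫⁻ y, g y ∂μ := by rw [lintegral_mul_const'' _ hg, mul_comm]

lemma setLIntegral_fiber_le (hE : MeasurableSet E) {K : ℝ≥0∞} {y : X}
    (hK : ∀ t, μ {x | (x, y) ∈ E ∧ V (x, y) ≤ t} ≤ K * t) (hβ : β ≤ 1) {s : ℝ≥0∞}
    (hs0 : s ≠ 0) (hs : s ≠ ∞) :
    ∫⁻ x in (fun x => (x, y)) ⁻¹' (E ∩ {p | V p ≤ s}), V (x, y) ^ (β - 1) ∂μ ≤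
      K * layerConst β * s ^ β := by
  have hEy : MeasurableSet ((fun x => (x, y)) ⁻¹' E) := measurable_prodMk_right hE
  have hK' : ∀ t, μ.restrict ((fun x => (x, y)) ⁻¹' E) {x | V (x, y) ≤ t} ≤ K * t := fun t => by
    rw [Measure.restrict_apply' hEy, Set.inter_comm]
    exact hK t
  have := setLIntegral_rpow_sub_one_le hK' hβ hs0 hs
  rwa [Measure.restrict_restrict' hEy, Set.inter_comm] at this

lemma aemeasurable_kernel_indicator (hE : MeasurableSet E) (hV : Measurable V)
    (hg : AEMeasurable g μ) :
    AEMeasurable (Function.uncurry fun x y => E.indicator (fun p => g p.2 * V p ^ (β - 1)) (x, y))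
      (μ.prod μ) :=
  (hg.comp_snd.mul (hV.pow_const _).aemeasurable).indicator hE

lemma kernelOp_eq_zero_of_lintegral_eq_zero (hg : AEMeasurable g μ) (hg0 : ∫⁻ y, g y ∂μ = 0)
    (x : X) : kernelOp μ E V β g x = 0 := by
  refine le_antisymm ((setLIntegral_le_lintegral _ _).trans_eq ?_) zero_le
  refine (lintegral_congr_ae ?_).trans lintegral_zero
  filter_upwards [(lintegral_eq_zero_iff' hg).1 hg0] with y hy
  simp [hy]

variable [SFinite μ]

lemma aemeasurable_kernelOp (hE : MeasurableSet E) (hV : Measurable V) (hg : AEMeasurable g μ) :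
    AEMeasurable (kernelOp μ E V β g) μ := by
  simp_rw [funext (kernelOp_eq_lintegral_indicator hE)]
  exact (aemeasurable_kernel_indicator hE hV hg).lintegral_prod_right'

lemma lintegral_kernelOp (hE : MeasurableSet E) (hV : Measurable V) (hg : AEMeasurable g μ) :
    ∫⁻ x, kernelOp μ E V β g x ∂μ =
      ∫⁻ y, g y * ∫⁻ x in (fun x => (x, y)) ⁻¹' E, V (x, y) ^ (β - 1) ∂μ ∂μ := by
  simp_rw [kernelOp_eq_lintegral_indicator hE]
  rw [lintegral_lintegral_swap (aemeasurable_kernel_indicator hE hV hg)]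
  congr 1 with y
  calc ∫⁻ x, E.indicator (fun p => g p.2 * V p ^ (β - 1)) (x, y) ∂μ
      = ∫⁻ x in (fun x => (x, y)) ⁻¹' E, g y * V (x, y) ^ (β - 1) ∂μ := by
        rw [← lintegral_indicator (measurable_prodMk_right hE)]
        rfl
    _ = g y * ∫⁻ x in (fun x => (x, y)) ⁻¹' E, V (x, y) ^ (β - 1) ∂μ :=
        lintegral_const_mul _ ((hV.comp measurable_prodMk_right).pow_const _)

lemma lintegral_kernelOp_inter_le (hE : MeasurableSet E) (hV : Measurable V) (hβ : β ≤ 1)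
    {K : ℝ≥0∞} (hK : ∀ᵐ y ∂μ, ∀ t, μ {x | (x, y) ∈ E ∧ V (x, y) ≤ t} ≤ K * t)
    (hg : AEMeasurable g μ) {s : ℝ≥0∞} (hs0 : s ≠ 0) (hs : s ≠ ∞) :
    ∫⁻ x, kernelOp μ (E ∩ {p | V p ≤ s}) V β g x ∂μ ≤
      K * layerConst β * s ^ β * ∫⁻ y, g y ∂μ := by
  rw [lintegral_kernelOp (hE.inter (measurableSet_le hV measurable_const)) hV hg]
  calc ∫⁻ y, g y * ∫⁻ x in (fun x => (x, y)) ⁻¹' (E ∩ {p | V p ≤ s}), V (x, y) ^ (β - 1) ∂μ ∂μ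
      ≤ ∫⁻ y, g y * (K * layerConst β * s ^ β) ∂μ :=
        lintegral_mono_ae (hK.mono fun y hy =>
          mul_le_mul_right (setLIntegral_fiber_le hE hy hβ hs0 hs) _)
    _ = K * layerConst β * s ^ β * ∫⁻ y, g y ∂μ := by rw [lintegral_mul_const'' _ hg, mul_comm]

lemma meas_lt_kernelOp_le_of_rpow_mul_le (hE : MeasurableSet E) (hV : Measurable V)
    (hβ : β ≤ 1) {K : ℝ≥0∞} (hK : ∀ᵐ y ∂μ, ∀ t, μ {x | (x, y) ∈ E ∧ V (x, y) ≤ t} ≤ K * t)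
    (hg : AEMeasurable g μ) {s : ℝ≥0∞} (hs0 : s ≠ 0) (hs : s ≠ ∞) {lam : ℝ≥0∞}
    (hlam0 : lam ≠ 0) (hlam : lam ≠ ∞) (hsg : s ^ (β - 1) * ∫⁻ y, g y ∂μ ≤ lam / 2) :
    μ {x | lam < kernelOp μ E V β g x} ≤
      K * layerConst β * s ^ β * (∫⁻ y, g y ∂μ) / (lam / 2) := by
  have hsub : {x | lam < kernelOp μ E V β g x} ⊆
      {x | lam / 2 ≤ kernelOp μ (E ∩ {p | V p ≤ s}) V β g x} := by
    intro x (hx : lam < _)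
    by_contra! h
    replace h : kernelOp μ (E ∩ {p | V p ≤ s}) V β g x < lam / 2 := not_le.1 h
    have hsplit : kernelOp μ E V β g x ≤ kernelOp μ (E ∩ {p | V p ≤ s}) V β g x + lam / 2 :=
      (kernelOp_le_kernelOp_inter_add hV hg hβ s x).trans (by gcongr)
    exact (hx.trans_le hsplit).not_ge
      ((ENNReal.add_lt_add_right (ENNReal.div_ne_top hlam two_ne_zero) h).le.trans_eq
        (ENNReal.add_halves lam))
  calc μ {x | lam < kernelOp μ E V β g x}
      ≤ μ {x | lam / 2 ≤ kernelOp μ (E ∩ {p | V p ≤ s}) V β g x} := measure_mono hsub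
    _ ≤ (∫⁻ x, kernelOp μ (E ∩ {p | V p ≤ s}) V β g x ∂μ) / (lam / 2) :=
        meas_ge_le_lintegral_div
          (aemeasurable_kernelOp (hE.inter (measurableSet_le hV measurable_const)) hV hg)
          (ENNReal.div_ne_zero.2 ⟨hlam0, ofNat_ne_top⟩) (ENNReal.div_ne_top hlam two_ne_zero)
    _ ≤ K * layerConst β * s ^ β * (∫⁻ y, g y ∂μ) / (lam / 2) := by
        gcongr
        exact lintegral_kernelOp_inter_le hE hV hβ hK hg hs0 hs

/-- The choice `s = (2‖g‖₁/λ)^(1/(1-β))` balances the two parts, `s^(β-1) ‖g‖₁ = λ/2`. -/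
theorem meas_lt_kernelOp_le (hE : MeasurableSet E) (hV : Measurable V) (hβ : β < 1)
    {K : ℝ≥0∞} (hK : ∀ᵐ y ∂μ, ∀ t, μ {x | (x, y) ∈ E ∧ V (x, y) ≤ t} ≤ K * t)
    (hg : AEMeasurable g μ) (hg_fin : ∫⁻ y, g y ∂μ ≠ ∞) {lam : ℝ≥0∞} (hlam0 : lam ≠ 0) :
    μ {x | lam < kernelOp μ E V β g x} ≤
      K * layerConst β * 2 ^ (1 / (1 - β)) * ((∫⁻ y, g y ∂μ) / lam) ^ (1 / (1 - β)) := by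
  set N := ∫⁻ y, g y ∂μ
  rcases eq_or_ne N 0 with hN0 | hN0
  · simp [kernelOp_eq_zero_of_lintegral_eq_zero hg hN0]
  rcases eq_or_ne lam ∞ with rfl | hlam
  · simp
  set u := 2 * N / lam
  have hu0 : u ≠ 0 := ENNReal.div_ne_zero.2 ⟨mul_ne_zero two_ne_zero hN0, hlam⟩
  have hu : u ≠ ∞ := ENNReal.div_ne_top (ENNReal.mul_ne_top ofNat_ne_top hg_fin) hlam0
  have hsN : (u ^ (1 / (1 - β))) ^ (β - 1) * N = lam / 2 := by
    rw [rpow_one_div_one_sub_rpow_sub_one u hβ, ENNReal.inv_div (.inl hlam) (.inl hlam0),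
      div_eq_mul_inv, ENNReal.mul_inv (.inl two_ne_zero) (.inl ofNat_ne_top), mul_assoc,
      mul_assoc, ENNReal.inv_mul_cancel hN0 hg_fin, mul_one, div_eq_mul_inv]
  calc μ {x | lam < kernelOp μ E V β g x}
      ≤ K * layerConst β * (u ^ (1 / (1 - β))) ^ β * N / (lam / 2) :=
        meas_lt_kernelOp_le_of_rpow_mul_le hE hV hβ.le hK hg
          (ENNReal.rpow_pos (pos_iff_ne_zero.2 hu0) hu).ne'
          (ENNReal.rpow_ne_top_of_nonneg (by bound) hu) hlam0 hlam hsN.le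
    _ = K * layerConst β * ((u ^ (1 / (1 - β))) ^ β * u) := by
        rw [mul_div_assoc, div_eq_mul_inv N, ENNReal.inv_div (.inl ofNat_ne_top) (.inl two_ne_zero),
          mul_div_assoc', mul_comm N 2]
        ring
    _ = K * layerConst β * 2 ^ (1 / (1 - β)) * (N / lam) ^ (1 / (1 - β)) := by
        rw [rpow_one_div_one_sub_rpow_mul_self hu0 hu hβ,
          show u = 2 * (N / lam) from mul_div_assoc _ _ _,
          ENNReal.mul_rpow_of_nonneg _ _ (by bound)]
        ring

end KernelOperator

variable {n : ℕ}

lemma mfun_nonneg (x : EuclideanSpace ℝ (Fin n)) : 0 ≤ mfun x :=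
  le_min zero_le_one (inv_nonneg.2 (norm_nonneg x))

lemma mfun_le_one (x : EuclideanSpace ℝ (Fin n)) : mfun x ≤ 1 := min_le_left _ _

lemma mfun_mul_norm_le_one (x : EuclideanSpace ℝ (Fin n)) : mfun x * ‖x‖ ≤ 1 := by
  rcases eq_or_ne x 0 with rfl | hx
  · simp
  · exact (mul_le_mul_of_nonneg_right (min_le_right _ _) (norm_nonneg x)).trans_eq
      (inv_mul_cancel₀ (norm_ne_zero_iff.2 hx))

lemma measurable_mfun : Measurable (mfun : EuclideanSpace ℝ (Fin n) → ℝ) :=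
  measurable_const.min measurable_norm.inv

lemma mfun_le_of_dist_le {a : ℝ} (ha : 0 ≤ a) {x y : EuclideanSpace ℝ (Fin n)} (hy : y ≠ 0)
    (h : dist x y ≤ a * mfun x) : mfun x ≤ (1 + a) * mfun y := by
  have hy' : 0 < ‖y‖ := norm_pos_iff.2 hy
  have hxy : ‖y‖ ≤ ‖x‖ + a * mfun x := by
    linarith [norm_le_norm_add_norm_sub' y x, dist_eq_norm' x y ▸ h]
  have h₀ := mfun_nonneg x
  have h₁ := mfun_le_one x
  have h₂ := mfun_mul_norm_le_one x
  have h₃ : mfun x ≤ (1 + a) * ‖y‖⁻¹ := by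
    rw [← div_eq_mul_inv, le_div_iff₀ hy']
    nlinarith [mul_le_mul_of_nonneg_left hxy h₀,
      mul_le_mul_of_nonneg_left (mul_le_one₀ h₁ h₀ h₁) ha]
  exact (le_min (by linarith) h₃).trans_eq (mul_min_of_nonneg _ _ (by linarith)).symm

lemma abs_sq_norm_sub_sq_norm_le {b : ℝ} (hb : 0 ≤ b) {x c : EuclideanSpace ℝ (Fin n)}
    (h : dist x c ≤ b * mfun c) : |‖x‖ ^ 2 - ‖c‖ ^ 2| ≤ 2 * b + b ^ 2 := by
  have hd : |‖x‖ - ‖c‖| ≤ b * mfun c := (abs_norm_sub_norm_le x c).trans (dist_eq_norm x c ▸ h)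
  have h₀ := mfun_nonneg c
  have h₁ := mfun_le_one c
  have h₂ := mfun_mul_norm_le_one c
  have hbm : b * mfun c ≤ b := mul_le_of_le_one_right hb h₁
  calc |‖x‖ ^ 2 - ‖c‖ ^ 2| = |‖x‖ - ‖c‖| * |(‖x‖ - ‖c‖) + 2 * ‖c‖| := by
        rw [← abs_mul]; ring_nf
    _ ≤ (b * mfun c) * (b * mfun c + 2 * ‖c‖) := by
        gcongr
        exact (abs_add_le _ _).trans
          (by rw [abs_of_nonneg (by positivity : (0 : ℝ) ≤ 2 * ‖c‖)]; linarith)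
    _ = (b * mfun c) ^ 2 + 2 * (b * (mfun c * ‖c‖)) := by ring
    _ ≤ 2 * b + b ^ 2 := by
        nlinarith [mul_le_mul hbm hbm (by positivity) hb, mul_le_mul_of_nonneg_left h₂ hb]

noncomputable def gaussDensity (n : ℕ) (x : EuclideanSpace ℝ (Fin n)) : ℝ :=
  Real.pi ^ (-(n : ℝ) / 2) * Real.exp (-‖x‖ ^ 2)

lemma gaussDensity_pos (x : EuclideanSpace ℝ (Fin n)) : 0 < gaussDensity n x := by
  unfold gaussDensity; positivity

lemma gaussDensity_le_exp_mul {x c : EuclideanSpace ℝ (Fin n)} {δ : ℝ}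
    (h : |‖x‖ ^ 2 - ‖c‖ ^ 2| ≤ δ) : gaussDensity n x ≤ exp δ * gaussDensity n c := by
  have : -‖x‖ ^ 2 ≤ δ + -‖c‖ ^ 2 := by linarith [neg_abs_le (‖x‖ ^ 2 - ‖c‖ ^ 2)]
  rw [gaussDensity, gaussDensity, mul_left_comm, ← Real.exp_add]
  gcongr

instance : SFinite (gauss n) := by unfold gauss; infer_instance

instance [NeZero n] : NullSingletonClass (gauss n) := by unfold gauss; infer_instance

lemma gauss_apply {s : Set (EuclideanSpace ℝ (Fin n))} (hs : MeasurableSet s) :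
    gauss n s = ∫⁻ x in s, ENNReal.ofReal (gaussDensity n x) :=
  withDensity_apply _ hs

lemma gauss_closedBall_le {b r : ℝ} (hb : 0 ≤ b) (c : EuclideanSpace ℝ (Fin n))
    (hr : r ≤ b * mfun c) :
    gauss n (closedBall c r) ≤
      ENNReal.ofReal (exp (2 * b + b ^ 2) * gaussDensity n c) * volume (closedBall c r) := by
  rw [gauss_apply measurableSet_closedBall, ← setLIntegral_const]
  refine setLIntegral_mono measurable_const fun x hx => ENNReal.ofReal_le_ofReal ?_
  exact gaussDensity_le_exp_mul (abs_sq_norm_sub_sq_norm_le hb ((mem_closedBall.1 hx).trans hr))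

lemma le_gauss_ball {b r : ℝ} (hb : 0 ≤ b) (c : EuclideanSpace ℝ (Fin n)) (hr : r ≤ b * mfun c) :
    ENNReal.ofReal ((exp (2 * b + b ^ 2))⁻¹ * gaussDensity n c) * volume (ball c r) ≤
      gauss n (ball c r) := by
  rw [gauss_apply measurableSet_ball, ← setLIntegral_const]
  refine setLIntegral_mono (by unfold gaussDensity; fun_prop) fun x hx =>
    ENNReal.ofReal_le_ofReal ?_
  rw [inv_mul_le_iff₀ (exp_pos _)]
  refine gaussDensity_le_exp_mul ?_
  rw [abs_sub_comm]
  exact abs_sq_norm_sub_sq_norm_le hb ((mem_ball.1 hx).le.trans hr)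

noncomputable def localRegion (n : ℕ) (a : ℝ) :
    Set (EuclideanSpace ℝ (Fin n) × EuclideanSpace ℝ (Fin n)) :=
  {p | p.2 ∈ ball p.1 (a * mfun p.1)}

noncomputable def gaussBallVol (n : ℕ) (p : EuclideanSpace ℝ (Fin n) × EuclideanSpace ℝ (Fin n)) :
    ℝ≥0∞ :=
  gauss n (ball p.1 (dist p.1 p.2))

lemma measurableSet_localRegion (a : ℝ) : MeasurableSet (localRegion n a) :=
  measurableSet_lt (measurable_snd.dist measurable_fst)
    (measurable_const.mul (measurable_mfun.comp measurable_fst))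

lemma measurable_gaussBallVol : Measurable (gaussBallVol n) :=
  measurable_measure_prodMk_left (measurableSet_lt (f := fun q => dist q.2 q.1.1)
    (g := fun q : (EuclideanSpace ℝ (Fin n) × EuclideanSpace ℝ (Fin n)) × _ => dist q.1.1 q.1.2)
    (by fun_prop) (by fun_prop))

lemma fracInt_eq_kernelOp (a β : ℝ) (f : EuclideanSpace ℝ (Fin n) → ℝ) :
    fracInt n a β f = kernelOp (gauss n) (localRegion n a) (gaussBallVol n) β (‖f ·‖ₑ) :=
  rfl

lemma fracInt_dim_zero (a β : ℝ) (f : EuclideanSpace ℝ (Fin 0) → ℝ)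
    (x : EuclideanSpace ℝ (Fin 0)) :
    fracInt 0 a β f x = 0 := by
  simp [fracInt, mfun, Subsingleton.elim x 0]

lemma le_gaussBallVol {a b : ℝ} (hb : 0 ≤ b) (hab : a ≤ b) {x y : EuclideanSpace ℝ (Fin n)}
    (hxy : (x, y) ∈ localRegion n a) :
    ENNReal.ofReal ((exp (2 * b + b ^ 2))⁻¹ ^ 2 * gaussDensity n y) *
      volume (ball x (dist x y)) ≤ gaussBallVol n (x, y) := by
  have hdb : dist x y ≤ b * mfun x :=
    (dist_comm x y ▸ mem_ball.1 hxy).le.trans (mul_le_mul_of_nonneg_right hab (mfun_nonneg x))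
  have hyx : gaussDensity n y ≤ exp (2 * b + b ^ 2) * gaussDensity n x :=
    gaussDensity_le_exp_mul (abs_sq_norm_sub_sq_norm_le hb (dist_comm x y ▸ hdb))
  have hκ : (exp (2 * b + b ^ 2))⁻¹ ^ 2 * gaussDensity n y ≤
      (exp (2 * b + b ^ 2))⁻¹ * gaussDensity n x := by
    rw [sq, mul_assoc]
    gcongr
    rwa [inv_mul_le_iff₀ (exp_pos _)]
  exact (mul_le_mul_left (ENNReal.ofReal_le_ofReal hκ) _).trans (le_gauss_ball hb x hdb)

lemma volume_closedBall_eq (x : EuclideanSpace ℝ (Fin n)) {r : ℝ} (hr : 0 ≤ r) :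
    volume (closedBall x r) =
      ENNReal.ofReal (r ^ n) * volume (ball (0 : EuclideanSpace ℝ (Fin n)) 1) := by
  rw [Measure.addHaar_closedBall _ _ hr, finrank_euclideanSpace_fin]

variable [NeZero n]

lemma volume_ball_eq (x : EuclideanSpace ℝ (Fin n)) {r : ℝ} (hr : 0 ≤ r) :
    volume (ball x r) =
      ENNReal.ofReal (r ^ n) * volume (ball (0 : EuclideanSpace ℝ (Fin n)) 1) := by
  rw [Measure.addHaar_ball _ _ hr, finrank_euclideanSpace_fin]

lemma ofReal_pow_le_iff_le_rpow_inv {d : ℝ} (hd : 0 ≤ d) {M : ℝ≥0∞} (hM : M ≠ ∞) :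
    ENNReal.ofReal (d ^ n) ≤ M ↔ d ≤ M.toReal ^ (n⁻¹ : ℝ) := by
  rw [ENNReal.ofReal_le_iff_le_toReal hM, ← pow_le_pow_iff_left₀ hd (by positivity) (NeZero.ne n),
    Real.rpow_inv_natCast_pow toReal_nonneg (NeZero.ne n)]

/-- `mfun 0 = 0` (as `0⁻¹ = 0`), so the comparison `m(x) ≲ m(y)` behind this bound needs
`y ≠ 0`. -/
theorem gauss_fiber_le {a : ℝ} (ha : 0 ≤ a) {y : EuclideanSpace ℝ (Fin n)} (hy : y ≠ 0)
    (t : ℝ≥0∞) :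
    gauss n {x | (x, y) ∈ localRegion n a ∧ gaussBallVol n (x, y) ≤ t} ≤
      ENNReal.ofReal (exp (2 * (a * (1 + a)) + (a * (1 + a)) ^ 2) ^ 3) * t := by
  set b := a * (1 + a)
  have hb : 0 ≤ b := by positivity
  have hab : a ≤ b := le_mul_of_one_le_right ha (by linarith)
  set κ := exp (2 * b + b ^ 2)
  rcases eq_or_ne t ∞ with rfl | ht
  · rw [ENNReal.mul_top (by positivity)]
    exact le_top
  set ω := volume (ball (0 : EuclideanSpace ℝ (Fin n)) 1)
  have hω : ω ≠ ∞ := measure_ball_lt_top.ne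
  set c := ENNReal.ofReal (κ⁻¹ ^ 2 * gaussDensity n y) * ω
  have hc0 : c ≠ 0 :=
    mul_ne_zero (by have := gaussDensity_pos y; positivity) (measure_ball_pos _ _ one_pos).ne'
  have hc : c ≠ ∞ := ENNReal.mul_ne_top ofReal_ne_top hω
  have htc : t / c ≠ ∞ := ENNReal.div_ne_top ht hc0
  set ρ := min ((t / c).toReal ^ (n⁻¹ : ℝ)) (b * mfun y)
  have hρ : 0 ≤ ρ := le_min (by positivity) (mul_nonneg hb (mfun_nonneg y))
  have hsub : {x | (x, y) ∈ localRegion n a ∧ gaussBallVol n (x, y) ≤ t} ⊆ closedBall y ρ := by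
    rintro x ⟨hxy, hV⟩
    have hd : dist x y ≤ a * mfun x := (dist_comm x y ▸ mem_ball.1 hxy).le
    refine mem_closedBall.2 (le_min ?_ ?_)
    · rw [← ofReal_pow_le_iff_le_rpow_inv dist_nonneg htc,
        ENNReal.le_div_iff_mul_le (.inl hc0) (.inl hc)]
      calc ENNReal.ofReal (dist x y ^ n) * c
          = ENNReal.ofReal (κ⁻¹ ^ 2 * gaussDensity n y) * volume (ball x (dist x y)) := by
            rw [volume_ball_eq x dist_nonneg]; ring
        _ ≤ t := (le_gaussBallVol hb hab hxy).trans hV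
    · calc dist x y ≤ a * mfun x := hd
        _ ≤ a * ((1 + a) * mfun y) := by gcongr; exact mfun_le_of_dist_le ha hy hd
        _ = b * mfun y := by ring
  calc gauss n {x | (x, y) ∈ localRegion n a ∧ gaussBallVol n (x, y) ≤ t}
      ≤ gauss n (closedBall y ρ) := measure_mono hsub
    _ ≤ ENNReal.ofReal (κ * gaussDensity n y) * volume (closedBall y ρ) :=
        gauss_closedBall_le hb y (min_le_right _ _)
    _ ≤ ENNReal.ofReal (κ * gaussDensity n y) * (t / c * ω) := by
        rw [volume_closedBall_eq y hρ]
        gcongr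
        exact (ofReal_pow_le_iff_le_rpow_inv hρ htc).2 (min_le_left _ _)
    _ = ENNReal.ofReal (κ ^ 3) * (c * (t / c)) := by
        have : κ * gaussDensity n y = κ ^ 3 * (κ⁻¹ ^ 2 * gaussDensity n y) := by
          field_simp
        rw [this, ENNReal.ofReal_mul (by positivity)]
        ring
    _ = ENNReal.ofReal (κ ^ 3) * t := by rw [ENNReal.mul_div_cancel hc0 hc]

noncomputable def fracIntConst (a β : ℝ) : ℝ≥0∞ :=
  ENNReal.ofReal (exp (2 * (a * (1 + a)) + (a * (1 + a)) ^ 2) ^ 3) * layerConst β *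
    2 ^ (1 / (1 - β))

lemma fracIntConst_ne_zero (a β : ℝ) : fracIntConst a β ≠ 0 :=
  mul_ne_zero (mul_ne_zero (ENNReal.ofReal_pos.2 (by positivity)).ne' (layerConst_ne_zero β))
    (ENNReal.rpow_pos (by norm_num) (by norm_num)).ne'

lemma fracIntConst_ne_top (a : ℝ) {β : ℝ} (hβ : 0 < β) : fracIntConst a β ≠ ∞ :=
  ENNReal.mul_ne_top (ENNReal.mul_ne_top ofReal_ne_top (layerConst_ne_top hβ))
    (ENNReal.rpow_ne_top_of_ne_zero (by norm_num) ofNat_ne_top)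

theorem meas_lt_fracInt_le {a β : ℝ} (ha : 0 ≤ a) (hβ : β < 1)
    {f : EuclideanSpace ℝ (Fin n) → ℝ} (hf : Integrable f (gauss n)) {lam : ℝ≥0∞}
    (hlam : lam ≠ 0) :
    gauss n {x | lam < fracInt n a β f x} ≤
      fracIntConst a β * (eLpNorm f 1 (gauss n) / lam) ^ (1 / (1 - β)) := by
  rw [fracInt_eq_kernelOp, eLpNorm_one_eq_lintegral_enorm]
  exact meas_lt_kernelOp_le (measurableSet_localRegion a) measurable_gaussBallVol hβ
    (((gauss n).ae_ne 0).mono fun y hy => gauss_fiber_le ha hy) hf.1.enorm hf.2.ne hlam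

end GaussFracInt

theorem stmt9 (n : ℕ) (a β : ℝ) (ha : 0 < a) (hβ : β ∈ Set.Ioo (0 : ℝ) 1) :
    ∃ C : ℝ, 0 < C ∧
      ∀ f : EuclideanSpace ℝ (Fin n) → ℝ, MemLp f 1 (gauss n) →
        ∀ lam : ℝ, 0 < lam →
          gauss n {x | ENNReal.ofReal lam < fracInt n a β f x} ≤
            ENNReal.ofReal C *
              (eLpNorm f 1 (gauss n) / ENNReal.ofReal lam) ^ (1 / (1 - β)) := by
  rcases eq_or_ne n 0 with rfl | hn
  · exact ⟨1, one_pos, fun f _ lam _ => by simp [GaussFracInt.fracInt_dim_zero]⟩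
  have : NeZero n := ⟨hn⟩
  open GaussFracInt in
  exact ⟨(fracIntConst a β).toReal,
    ENNReal.toReal_pos (fracIntConst_ne_zero a β) (fracIntConst_ne_top a hβ.1),
    fun f hf lam hlam => by
      rw [ENNReal.ofReal_toReal (fracIntConst_ne_top a hβ.1)]
      exact meas_lt_fracInt_le ha.le hβ.2 (memLp_one_iff_integrable.1 hf)
        (ENNReal.ofReal_pos.2 hlam).ne'⟩
end

section
/- Let γ be the Gauss measure on ℝⁿ, a > 0, β ∈ (0,1), p ∈ (1, 1/β). There is a constant C such that for all f ∈ L^p(γ) and all x ∈ ℝⁿ, I_a^β(|f|)(x) ≤ C ‖f‖_{L^p(γ)}^{βp} (𝓜_a f(x))^{1 - βp}, where 𝓜_a is the noncentered local Hardy–Littlewood maximal operator relative to γ. -/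
open MeasureTheory Metric Real ENNReal

/-- The noncentered local Hardy–Littlewood maximal operator
`𝓜_a f(x) = sup_{B ∈ 𝓑_a(x)} γ(B)⁻¹ ∫_B |f| dγ`. -/
noncomputable def maxloc (n : ℕ) (a : ℝ) (f : EuclideanSpace ℝ (Fin n) → ℝ)
    (x : EuclideanSpace ℝ (Fin n)) : ℝ≥0∞ :=
  ⨆ (c : EuclideanSpace ℝ (Fin n)) (r : ℝ) (_ : 0 < r) (_ : r ≤ a * mfun c)
    (_ : x ∈ ball c r),
      (gauss n (ball c r))⁻¹ * ∫⁻ y in ball c r, ‖f y‖₊ ∂gauss n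


/-!
Hedberg's argument. Put `V(y) = γ(B(x, |x - y|))`. A sublevel set `{V ≤ s}` of the ball
`B(x, a m(x))` lies in a closed ball `B̄(x, ρ)` with `γ(B(x, ρ)) ≤ s`; since spheres are
`γ`-null, `B(x, ρ)` is an admissible ball for `𝓜_a f(x)` carrying the same mass of `|f|`. Hence
`|f|` has mass at most `min (𝓜_a f(x) s) (‖f‖_p s^{1 - 1/p})` on `{V ≤ s}`, the second bound by
Hölder. Cutting the kernel `V^{β-1}` at the dyadic levels `t 2^k`, `k ∈ ℤ`, bounds
`I_a^β(|f|)(x)` by `∑_k (t 2^k)^{β-1}` times these masses: two geometric series, balanced by the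
choice `t = (‖f‖_p / 𝓜_a f(x))^p`.
-/

namespace ENNReal

lemma rpow_le_rpow_of_nonpos_s10 {x y : ℝ≥0∞} {z : ℝ} (hxy : x ≤ y) (hz : z ≤ 0) :
    y ^ z ≤ x ^ z := by
  rw [← neg_neg z, ENNReal.rpow_neg y, ENNReal.rpow_neg x, ← ENNReal.inv_rpow,
    ← ENNReal.inv_rpow]
  exact ENNReal.rpow_le_rpow (ENNReal.inv_le_inv.2 hxy) (neg_nonneg.2 hz)

lemma mul_div_rpow {x y : ℝ≥0∞} (hx0 : x ≠ 0) (hx : x ≠ ∞) (hy : y ≠ ∞) (a : ℝ) :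
    x * (y / x) ^ a = y ^ a * x ^ (1 - a) := by
  rw [div_eq_mul_inv, mul_rpow_of_ne_top hy (ENNReal.inv_ne_top.2 hx0), ENNReal.inv_rpow,
    ← ENNReal.rpow_neg, sub_eq_add_neg, ENNReal.rpow_add _ _ hx0 hx, ENNReal.rpow_one]
  ring

lemma mul_two_zpow_rpow {t : ℝ≥0∞} (ht : t ≠ ∞) (k : ℤ) (e : ℝ) :
    (t * 2 ^ k) ^ e = t ^ e * 2 ^ ((k : ℝ) * e) := by
  rw [mul_rpow_of_ne_top ht (zpow_ne_top two_ne_zero ofNat_ne_top k) e, ← rpow_intCast,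
    ← ENNReal.rpow_mul]

lemma exists_dyadic_rpow_sub_one_le {u t : ℝ≥0∞} (hu0 : u ≠ 0) (hu : u ≠ ∞) (ht0 : t ≠ 0)
    (ht : t ≠ ∞) {β : ℝ} (hβ : β ≤ 1) :
    ∃ k : ℤ, u ≤ t * 2 ^ k ∧ u ^ (β - 1) ≤ 2 ^ (1 - β) * (t * 2 ^ k) ^ (β - 1) := by
  obtain ⟨k, hlo, hhi⟩ := exists_mem_Ioc_zpow (ENNReal.div_pos hu0 ht).ne'
    (ENNReal.div_ne_top hu ht0) one_lt_two ofNat_ne_top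
  rw [ENNReal.lt_div_iff_mul_lt (.inl ht0) (.inl ht), mul_comm] at hlo
  rw [ENNReal.div_le_iff ht0 ht, mul_comm] at hhi
  refine ⟨k + 1, hhi, ?_⟩
  calc u ^ (β - 1) ≤ (t * 2 ^ k) ^ (β - 1) := rpow_le_rpow_of_nonpos_s10 hlo.le (by linarith)
    _ = 2 ^ (1 - β) * (t * 2 ^ (k + 1)) ^ (β - 1) := by
        rw [mul_two_zpow_rpow ht, mul_two_zpow_rpow ht, mul_left_comm,
          ← ENNReal.rpow_add _ _ two_ne_zero ofNat_ne_top]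
        push_cast
        ring_nf

lemma tsum_two_rpow_mul_ne_top {c : ℝ} (hc : c < 0) :
    ∑' j : ℕ, (2 : ℝ≥0∞) ^ ((j : ℝ) * c) ≠ ∞ := by
  simp_rw [mul_comm _ c, ENNReal.rpow_mul, ENNReal.rpow_natCast]
  exact (tsum_geometric_lt_top.2 (rpow_lt_one_of_one_lt_of_neg one_lt_two hc)).ne

lemma rpow_sub_one_mul_le_min {s I M N : ℝ≥0∞} (hs0 : s ≠ 0) (hs : s ≠ ∞) (β p : ℝ)
    (hM : I ≤ M * s) (hN : I ≤ N * s ^ (1 - p⁻¹)) :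
    s ^ (β - 1) * I ≤ min (M * s ^ β) (N * s ^ (β - p⁻¹)) := by
  calc s ^ (β - 1) * I
      ≤ min (s ^ (β - 1) * (M * s ^ (1 : ℝ))) (s ^ (β - 1) * (N * s ^ (1 - p⁻¹))) := by
        rw [ENNReal.rpow_one]
        exact le_min (by gcongr) (by gcongr)
    _ = min (M * s ^ β) (N * s ^ (β - p⁻¹)) := by
        rw [mul_left_comm, ← ENNReal.rpow_add _ _ hs0 hs, mul_left_comm,
          ← ENNReal.rpow_add _ _ hs0 hs]
        ring_nf

end ENNReal

noncomputable def hedbergConst (β p : ℝ) : ℝ≥0∞ :=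
  2 ^ (1 - β) * ∑' k : ℤ, min (2 ^ ((k : ℝ) * β)) (2 ^ ((k : ℝ) * (β - p⁻¹)))

lemma hedbergConst_ne_top {β p : ℝ} (hβ : 0 < β) (hβp : β < p⁻¹) : hedbergConst β p ≠ ∞ := by
  refine mul_ne_top (rpow_ne_top_of_ne_zero two_ne_zero ofNat_ne_top) ?_
  rw [tsum_of_nat_of_neg_add_one ENNReal.summable ENNReal.summable]
  refine ENNReal.add_ne_top.2 ⟨?_, ?_⟩
  · exact ne_top_of_le_ne_top (ENNReal.tsum_two_rpow_mul_ne_top (c := β - p⁻¹) (by linarith))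
      (ENNReal.tsum_le_tsum fun j => min_le_right _ _)
  · refine ne_top_of_le_ne_top (ENNReal.tsum_two_rpow_mul_ne_top (neg_neg_of_pos hβ))
      (ENNReal.tsum_le_tsum fun j => (min_le_left _ _).trans
        (ENNReal.rpow_le_rpow_of_exponent_le one_le_two ?_))
    push_cast
    nlinarith

lemma hedbergConst_ne_zero (β p : ℝ) : hedbergConst β p ≠ 0 := by
  refine mul_ne_zero (ENNReal.rpow_pos two_pos ofNat_ne_top).ne' fun h => ?_
  simpa using ENNReal.tsum_eq_zero.1 h 0

section Hedberg

variable {α : Type*} [MeasurableSpace α] {μ : Measure α} {g V : α → ℝ≥0∞}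

lemma lintegral_mul_rpow_sub_one_le_tsum (hg : AEMeasurable g μ) (hV : Measurable V)
    (hV0 : ∀ᵐ y ∂μ, V y ≠ 0) (hVtop : ∀ᵐ y ∂μ, V y ≠ ∞) {β : ℝ} (hβ : β ≤ 1)
    {t : ℝ≥0∞} (ht0 : t ≠ 0) (ht : t ≠ ∞) :
    ∫⁻ y, g y * V y ^ (β - 1) ∂μ ≤
      2 ^ (1 - β) * ∑' k : ℤ, (t * 2 ^ k) ^ (β - 1) * ∫⁻ y in {y | V y ≤ t * 2 ^ k}, g y ∂μ := by
  have hmeas (k : ℤ) : MeasurableSet {y | V y ≤ t * 2 ^ k} :=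
    measurableSet_le hV measurable_const
  have hne_top (k : ℤ) : (t * 2 ^ k) ^ (β - 1) ≠ ∞ :=
    rpow_ne_top_of_ne_zero (mul_ne_zero ht0 (ENNReal.zpow_pos two_ne_zero ofNat_ne_top k).ne')
      (mul_ne_top ht (zpow_ne_top two_ne_zero ofNat_ne_top k))
  calc ∫⁻ y, g y * V y ^ (β - 1) ∂μ
      ≤ ∫⁻ y, 2 ^ (1 - β) *
          ∑' k : ℤ, (t * 2 ^ k) ^ (β - 1) * {y | V y ≤ t * 2 ^ k}.indicator g y ∂μ := by
        refine lintegral_mono_ae ?_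
        filter_upwards [hV0, hVtop] with y hy0 hy
        obtain ⟨k, hyk, hkernel⟩ := ENNReal.exists_dyadic_rpow_sub_one_le hy0 hy ht0 ht hβ
        calc g y * V y ^ (β - 1) ≤ g y * (2 ^ (1 - β) * (t * 2 ^ k) ^ (β - 1)) :=
              mul_le_mul_right hkernel _
          _ = 2 ^ (1 - β) * ((t * 2 ^ k) ^ (β - 1) * {y | V y ≤ t * 2 ^ k}.indicator g y) := by
              rw [Set.indicator_of_mem (show y ∈ {y | V y ≤ t * 2 ^ k} from hyk)]
              ring
          _ ≤ _ := by gcongr; exact ENNReal.le_tsum k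
    _ = 2 ^ (1 - β) *
          ∑' k : ℤ, (t * 2 ^ k) ^ (β - 1) * ∫⁻ y in {y | V y ≤ t * 2 ^ k}, g y ∂μ := by
        rw [lintegral_const_mul' _ _ (rpow_ne_top_of_nonneg (by linarith) ofNat_ne_top),
          lintegral_tsum fun k => (hg.indicator (hmeas k)).const_mul _]
        simp_rw [lintegral_const_mul' _ _ (hne_top _), lintegral_indicator (hmeas _)]

lemma lintegral_mul_rpow_sub_one_le_of_ne {β p : ℝ} (hg : AEMeasurable g μ) (hV : Measurable V)
    (hV0 : ∀ᵐ y ∂μ, V y ≠ 0) (hVtop : ∀ᵐ y ∂μ, V y ≠ ∞) (hβ : β ≤ 1) (hp : 0 < p)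
    {M N : ℝ≥0∞} (hM0 : M ≠ 0) (hM : M ≠ ∞) (hN0 : N ≠ 0) (hN : N ≠ ∞)
    (hMs : ∀ s, ∫⁻ y in {y | V y ≤ s}, g y ∂μ ≤ M * s)
    (hNs : ∀ s, ∫⁻ y in {y | V y ≤ s}, g y ∂μ ≤ N * s ^ (1 - p⁻¹)) :
    ∫⁻ y, g y * V y ^ (β - 1) ∂μ ≤
      hedbergConst β p * N ^ (β * p) * M ^ (1 - β * p) := by
  set Q := N ^ (β * p) * M ^ (1 - β * p)
  set t := (N / M) ^ p
  have ht0 : t ≠ 0 := (rpow_pos_of_nonneg (ENNReal.div_pos hN0 hM) hp.le).ne'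
  have ht : t ≠ ∞ := rpow_ne_top_of_nonneg hp.le (div_ne_top hN hM0)
  have hMt : M * t ^ β = Q := by
    rw [← ENNReal.rpow_mul, ENNReal.mul_div_rpow hM0 hM hN, mul_comm p]
  have hNt : N * t ^ (β - p⁻¹) = Q := by
    have : p * (β - p⁻¹) = -(1 - β * p) := by field_simp; ring
    rw [← ENNReal.rpow_mul, this, ENNReal.rpow_neg, ← ENNReal.inv_rpow,
      ENNReal.inv_div (.inl hM) (.inl hM0), ENNReal.mul_div_rpow hN0 hN hM,
      _root_.sub_sub_cancel, mul_comm]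
  have hterm (k : ℤ) : (t * 2 ^ k) ^ (β - 1) * ∫⁻ y in {y | V y ≤ t * 2 ^ k}, g y ∂μ ≤
      Q * min (2 ^ ((k : ℝ) * β)) (2 ^ ((k : ℝ) * (β - p⁻¹))) := by
    refine (ENNReal.rpow_sub_one_mul_le_min
      (mul_ne_zero ht0 (ENNReal.zpow_pos two_ne_zero ofNat_ne_top k).ne')
      (mul_ne_top ht (ENNReal.zpow_lt_top two_ne_zero ofNat_ne_top k).ne) β p
      (hMs _) (hNs _)).trans_eq ?_
    rw [ENNReal.mul_two_zpow_rpow ht, ENNReal.mul_two_zpow_rpow ht, ← mul_assoc, ← mul_assoc,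
      hMt, hNt, mul_min]
  calc ∫⁻ y, g y * V y ^ (β - 1) ∂μ
      ≤ 2 ^ (1 - β) *
          ∑' k : ℤ, (t * 2 ^ k) ^ (β - 1) * ∫⁻ y in {y | V y ≤ t * 2 ^ k}, g y ∂μ :=
        lintegral_mul_rpow_sub_one_le_tsum hg hV hV0 hVtop hβ ht0 ht
    _ ≤ 2 ^ (1 - β) * ∑' k : ℤ, Q * min (2 ^ ((k : ℝ) * β)) (2 ^ ((k : ℝ) * (β - p⁻¹))) :=
        mul_le_mul_right (ENNReal.tsum_le_tsum hterm) _
    _ = hedbergConst β p * N ^ (β * p) * M ^ (1 - β * p) := by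
        rw [ENNReal.tsum_mul_left, hedbergConst]
        ring

lemma lintegral_mul_rpow_sub_one_le {β p : ℝ} (hg : AEMeasurable g μ) (hV : Measurable V)
    (hV0 : ∀ᵐ y ∂μ, V y ≠ 0) (hVtop : ∀ᵐ y ∂μ, V y ≠ ∞) (hβ0 : 0 < β) (hβ1 : β ≤ 1)
    (hp : 0 < p) (hβp : β * p < 1) {M N : ℝ≥0∞}
    (hMs : ∀ s, ∫⁻ y in {y | V y ≤ s}, g y ∂μ ≤ M * s)
    (hNs : ∀ s, ∫⁻ y in {y | V y ≤ s}, g y ∂μ ≤ N * s ^ (1 - p⁻¹)) :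
    ∫⁻ y, g y * V y ^ (β - 1) ∂μ ≤
      hedbergConst β p * N ^ (β * p) * M ^ (1 - β * p) := by
  have hβp0 : 0 < β * p := mul_pos hβ0 hp
  by_cases hMN0 : M = 0 ∨ N = 0
  · have hzero (s : ℝ≥0∞) : ∫⁻ y in {y | V y ≤ s}, g y ∂μ = 0 := by
      rcases hMN0 with h | h
      · simpa [h] using hMs s
      · simpa [h] using hNs s
    calc ∫⁻ y, g y * V y ^ (β - 1) ∂μ ≤ _ :=
          lintegral_mul_rpow_sub_one_le_tsum hg hV hV0 hVtop hβ1 one_ne_zero one_ne_top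
      _ = 0 := by simp [hzero]
      _ ≤ _ := zero_le
  push Not at hMN0
  obtain ⟨hM0, hN0⟩ := hMN0
  by_cases hMN : M = ∞ ∨ N = ∞
  · have : N ^ (β * p) * M ^ (1 - β * p) = ∞ := by
      rcases hMN with h | h
      · rw [h, top_rpow_of_pos (by linarith)]
        exact mul_top (rpow_pos_of_nonneg (pos_iff_ne_zero.2 hN0) hβp0.le).ne'
      · rw [h, top_rpow_of_pos hβp0]
        exact top_mul (rpow_pos_of_nonneg (pos_iff_ne_zero.2 hM0) (by linarith)).ne'
    rw [mul_assoc, this, mul_top (hedbergConst_ne_zero β p)]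
    exact le_top
  push Not at hMN
  exact lintegral_mul_rpow_sub_one_le_of_ne hg hV hV0 hVtop hβ1 hp hM0 hMN.1 hN0 hMN.2 hMs hNs

end Hedberg

lemma setLIntegral_enorm_le_eLpNorm_mul_rpow {α E : Type*} [MeasurableSpace α]
    [NormedAddCommGroup E] {μ : Measure α} {f : α → E} (hf : AEStronglyMeasurable f μ)
    {p : ℝ} (hp : 1 ≤ p) (S : Set α) :
    ∫⁻ y in S, ‖f y‖ₑ ∂μ ≤ eLpNorm f (ENNReal.ofReal p) μ * μ S ^ (1 - p⁻¹) := by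
  rw [← eLpNorm_one_eq_lintegral_enorm]
  calc eLpNorm f 1 (μ.restrict S)
      ≤ eLpNorm f (ENNReal.ofReal p) (μ.restrict S) * μ.restrict S Set.univ ^
          (1 / (1 : ℝ≥0∞).toReal - 1 / (ENNReal.ofReal p).toReal) :=
        eLpNorm_le_eLpNorm_mul_rpow_measure_univ (by simpa using hp) hf.restrict
    _ ≤ eLpNorm f (ENNReal.ofReal p) μ * μ S ^ (1 - p⁻¹) := by
        rw [Measure.restrict_apply_univ, toReal_ofReal (by linarith)]
        simp only [toReal_one, div_one, one_div]
        gcongr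
        exact Measure.restrict_le_self

section Radial

variable {X : Type*} [PseudoMetricSpace X] [MeasurableSpace X] (μ : Measure X)

lemma measure_ball_le_of_forall_lt {x : X} {ρ : ℝ} {s : ℝ≥0∞} (h : ∀ r < ρ, μ (ball x r) ≤ s) :
    μ (ball x ρ) ≤ s := by
  have : ball x ρ = ⋃ r : Set.Iio ρ, ball x r := by
    rw [← biUnion_lt_ball]; ext; simp
  rw [this, Monotone.measure_iUnion (s := fun r : Set.Iio ρ => ball x r)
    fun r r' h => ball_subset_ball h]
  exact iSup_le fun r => h r r.2

lemma exists_sublevel_subset_closedBall (x : X) (R : ℝ) (s : ℝ≥0∞) :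
    ∃ ρ ≤ R, μ (ball x ρ) ≤ s ∧
      {y | μ (ball x (dist x y)) ≤ s} ∩ ball x R ⊆ closedBall x ρ := by
  set T := {r | r ≤ R ∧ μ (ball x r) ≤ s}
  have hT : T.Nonempty := ⟨min R 0, min_le_left _ _, by simp [ball_eq_empty.2 (min_le_right R 0)]⟩
  have hTbdd : BddAbove T := ⟨R, fun r hr => hr.1⟩
  refine ⟨sSup T, csSup_le hT fun r hr => hr.1, ?_, fun y hy => ?_⟩
  · refine measure_ball_le_of_forall_lt μ fun r hr => ?_
    obtain ⟨r', hr'T, hrr'⟩ := exists_lt_of_lt_csSup hT hr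
    exact (measure_mono (ball_subset_ball hrr'.le)).trans hr'T.2
  · rw [mem_closedBall, dist_comm]
    exact le_csSup hTbdd ⟨(mem_ball'.1 hy.2).le, hy.1⟩

lemma measurable_measure_ball_dist [OpensMeasurableSpace X] (x : X) :
    Measurable fun y => μ (ball x (dist x y)) := by
  have hmono : Monotone fun r => μ (ball x r) := fun _ _ h => measure_mono (ball_subset_ball h)
  exact hmono.measurable.comp (continuous_const.dist continuous_id).measurable

end Radial

section Gauss

variable {n : ℕ}

lemma gauss_absolutelyContinuous : gauss n ≪ volume :=
  withDensity_absolutelyContinuous _ _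

instance : (gauss n).IsOpenPosMeasure :=
  (withDensity_absolutelyContinuous' (by fun_prop)
    (ae_of_all _ fun x => by positivity)).isOpenPosMeasure

instance : IsLocallyFiniteMeasure (gauss n) :=
  .withDensity_ofReal (by fun_prop)

instance [Nontrivial (EuclideanSpace ℝ (Fin n))] : NullSingletonClass (gauss n) := by
  unfold gauss; infer_instance

lemma gauss_closedBall_ae_eq_ball [Nontrivial (EuclideanSpace ℝ (Fin n))]
    (c : EuclideanSpace ℝ (Fin n)) (r : ℝ) : closedBall c r =ᵐ[gauss n] ball c r := by
  refine ae_eq_set.2 ⟨?_, by simp [Set.sdiff_eq_empty.2 ball_subset_closedBall]⟩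
  rw [closedBall_sdiff_ball]
  exact gauss_absolutelyContinuous (Measure.addHaar_sphere _ c r)

lemma gauss_sublevel_le [Nontrivial (EuclideanSpace ℝ (Fin n))]
    (x : EuclideanSpace ℝ (Fin n)) (R : ℝ) (s : ℝ≥0∞) :
    gauss n ({y | gauss n (ball x (dist x y)) ≤ s} ∩ ball x R) ≤ s := by
  obtain ⟨ρ, -, hρs, hsub⟩ := exists_sublevel_subset_closedBall (gauss n) x R s
  calc _ ≤ gauss n (closedBall x ρ) := measure_mono hsub
    _ = gauss n (ball x ρ) := measure_congr (gauss_closedBall_ae_eq_ball x ρ)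
    _ ≤ s := hρs

lemma setLIntegral_ball_le_maxloc_mul {a : ℝ} (f : EuclideanSpace ℝ (Fin n) → ℝ)
    {x c : EuclideanSpace ℝ (Fin n)} {r : ℝ} (hr : 0 < r) (hra : r ≤ a * mfun c)
    (hx : x ∈ ball c r) :
    ∫⁻ y in ball c r, ‖f y‖₊ ∂gauss n ≤ maxloc n a f x * gauss n (ball c r) := by
  rw [mul_comm, ← ENNReal.inv_mul_le_iff (measure_ball_pos _ _ hr).ne' measure_ball_lt_top.ne]
  exact le_iSup₂_of_le c r (le_iSup₂_of_le hr hra (le_iSup_of_le hx le_rfl))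

lemma setLIntegral_sublevel_le_maxloc_mul [Nontrivial (EuclideanSpace ℝ (Fin n))] {a : ℝ}
    (f : EuclideanSpace ℝ (Fin n) → ℝ) (x : EuclideanSpace ℝ (Fin n)) {R : ℝ}
    (hR : R ≤ a * mfun x) (s : ℝ≥0∞) :
    ∫⁻ y in {y | gauss n (ball x (dist x y)) ≤ s} ∩ ball x R, ‖f y‖₊ ∂gauss n ≤
      maxloc n a f x * s := by
  obtain ⟨ρ, hρR, hρs, hsub⟩ := exists_sublevel_subset_closedBall (gauss n) x R s
  calc _ ≤ ∫⁻ y in closedBall x ρ, ‖f y‖₊ ∂gauss n := lintegral_mono_set hsub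
    _ = ∫⁻ y in ball x ρ, ‖f y‖₊ ∂gauss n := setLIntegral_congr (gauss_closedBall_ae_eq_ball x ρ)
    _ ≤ maxloc n a f x * gauss n (ball x ρ) := by
        rcases le_or_gt ρ 0 with hρ | hρ
        · simp [ball_eq_empty.2 hρ]
        · exact setLIntegral_ball_le_maxloc_mul f hρ (hρR.trans hR) (mem_ball_self hρ)
    _ ≤ maxloc n a f x * s := by gcongr

end Gauss

-- Lean's `0⁻¹ = 0` gives `m(0) = 0` instead of the paper's `m(0) = 1`.
lemma mfun_zero {n : ℕ} : mfun (0 : EuclideanSpace ℝ (Fin n)) = 0 := by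
  simp [mfun]

lemma fracInt_le_mul {n : ℕ} [Nontrivial (EuclideanSpace ℝ (Fin n))] {a β p : ℝ} (hβ : 0 < β)
    (hp : 1 ≤ p) (hβp : β * p < 1) {f : EuclideanSpace ℝ (Fin n) → ℝ}
    (hf : AEStronglyMeasurable f (gauss n)) (x : EuclideanSpace ℝ (Fin n)) :
    fracInt n a β f x ≤ hedbergConst β p *
      eLpNorm f (ENNReal.ofReal p) (gauss n) ^ (β * p) * maxloc n a f x ^ (1 - β * p) := by
  have hV := measurable_measure_ball_dist (gauss n) x
  have hV0 : ∀ᵐ y ∂gauss n, gauss n (ball x (dist x y)) ≠ 0 :=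
    (gauss n).ae_ne x |>.mono fun y hy => (measure_ball_pos _ _ (dist_pos.2 hy.symm)).ne'
  refine lintegral_mul_rpow_sub_one_le hf.enorm.restrict hV (ae_restrict_of_ae hV0)
    (ae_of_all _ fun y => measure_ball_lt_top.ne) hβ (by nlinarith) (by linarith) hβp
    (fun s => ?_) (fun s => ?_)
  all_goals rw [Measure.restrict_restrict (measurableSet_le hV measurable_const)]
  · exact setLIntegral_sublevel_le_maxloc_mul f x le_rfl s
  · refine (setLIntegral_enorm_le_eLpNorm_mul_rpow hf hp _).trans ?_
    gcongr
    · exact sub_nonneg.2 (inv_le_one_of_one_le₀ hp)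
    · exact gauss_sublevel_le x _ s

theorem stmt10_general (n : ℕ) (a β p : ℝ) (hβ : β ∈ Set.Ioo (0 : ℝ) 1)
    (hp : 1 < p) (hpβ : p < 1 / β) :
    ∃ C : ℝ, 0 < C ∧
      ∀ f : EuclideanSpace ℝ (Fin n) → ℝ, MemLp f (ENNReal.ofReal p) (gauss n) →
        ∀ x, fracInt n a β f x ≤
          ENNReal.ofReal C * eLpNorm f (ENNReal.ofReal p) (gauss n) ^ (β * p) *
            maxloc n a f x ^ (1 - β * p) := by
  obtain ⟨hβ0, -⟩ := hβ
  have hp0 : 0 < p := one_pos.trans hp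
  have hβp : β * p < 1 := by rwa [lt_div_iff₀ hβ0, mul_comm] at hpβ
  have hC := hedbergConst_ne_top hβ0 (by simpa using (lt_one_div hp0 hβ0).1 hpβ)
  refine ⟨(hedbergConst β p).toReal, ENNReal.toReal_pos (hedbergConst_ne_zero β p) hC,
    fun f hf x => ?_⟩
  rw [ENNReal.ofReal_toReal hC]
  rcases le_or_gt (a * mfun x) 0 with hR | hR
  · simp [fracInt, ball_eq_empty.2 hR]
  have hx : x ≠ 0 := by
    rintro rfl
    simp [mfun_zero] at hR
  have : Nontrivial (EuclideanSpace ℝ (Fin n)) := nontrivial_of_ne x 0 hx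
  exact fracInt_le_mul hβ0 hp.le hβp hf.aestronglyMeasurable x

theorem stmt10 (n : ℕ) (a β p : ℝ) (ha : 0 < a) (hβ : β ∈ Set.Ioo (0 : ℝ) 1)
    (hp : 1 < p) (hpβ : p < 1 / β) :
    ∃ C : ℝ, 0 < C ∧
      ∀ f : EuclideanSpace ℝ (Fin n) → ℝ, MemLp f (ENNReal.ofReal p) (gauss n) →
        ∀ x, fracInt n a β f x ≤
          ENNReal.ofReal C * eLpNorm f (ENNReal.ofReal p) (gauss n) ^ (β * p) *
            maxloc n a f x ^ (1 - β * p) :=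
  stmt10_general n a β p hβ hp hpβ
end

section
/- Let γ be the Gauss measure on ℝⁿ, a > 0, β ∈ (0,1). There is a constant C such that for every f ∈ L^{1/β}(γ), ‖I_a^β(f)‖_{L¹(γ)} ≤ C ‖f‖_{L^{1/β}(γ)}, where I_a^β f(x) = ∫_{B(x, a·m(x))} f(y)/V(x,y)^{1-β} dγ(y). -/
/-!
Swapping the integrals, it suffices to bound `∫ K(x, y) dγ(x)` uniformly in `y`, where
`K(x, y) = 1_{|x - y| < a m(x)} V(x, y)^{β - 1}`: then `‖I f‖₁ ≤ (sup_y …) ‖f‖₁ ≤ (sup_y …) ‖f‖_{1/β}`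
because `γ` is a probability measure. On the local region the Gauss density `ρ` varies by at most
the factor `e^{2a + a²}` over `B(x, |x - y|)`, so `V(x, y) ≥ e^{-(2a + a²)} ρ(x) |B(x, |x - y|)|`.
Writing `ρ V^{β - 1} = ρ^β (ρ / V)^{1 - β}` and using `ρ ≤ π^{-n/2}`, the `γ`-integrand `ρ K(·, y)` is
at most a constant times `|x - y|^{-n(1 - β)}` on `B(y, a)`, which is integrable since `β > 0`.
-/

open MeasureTheory Metric Real ENNReal

section Schur

variable {X Y : Type*} [MeasurableSpace X] [MeasurableSpace Y] {μ : Measure X} {ν : Measure Y}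
  [SFinite μ] [SFinite ν]

theorem lintegral_lintegral_mul_le_of_lintegral_le {k : X → Y → ℝ≥0∞} {f : Y → ℝ≥0∞}
    {K : ℝ≥0∞} (hk : Measurable (Function.uncurry k)) (hf : AEMeasurable f ν)
    (hK : ∀ y, ∫⁻ x, k x y ∂μ ≤ K) :
    ∫⁻ x, ∫⁻ y, f y * k x y ∂ν ∂μ ≤ K * ∫⁻ y, f y ∂ν := by
  calc ∫⁻ x, ∫⁻ y, f y * k x y ∂ν ∂μ = ∫⁻ y, ∫⁻ x, f y * k x y ∂μ ∂ν :=
        lintegral_lintegral_swap (hf.comp_snd.mul hk.aemeasurable)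
    _ = ∫⁻ y, f y * ∫⁻ x, k x y ∂μ ∂ν :=
        lintegral_congr fun y => lintegral_const_mul _ hk.of_uncurry_right
    _ ≤ ∫⁻ y, f y * K ∂ν := by gcongr with y; exact hK y
    _ = K * ∫⁻ y, f y ∂ν := by rw [lintegral_mul_const'' _ hf, mul_comm]

end Schur

theorem measurable_measure_ball_dist_s13 {X : Type*} [PseudoMetricSpace X] [MeasurableSpace X]
    [OpensMeasurableSpace X] [SecondCountableTopology X] (μ : Measure X) [SFinite μ] :
    Measurable fun p : X × X => μ (ball p.1 (dist p.1 p.2)) :=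
  measurable_measure_prodMk_left (s := {q : (X × X) × X | dist q.2 q.1.1 < dist q.1.1 q.1.2})
    (measurableSet_lt (measurable_snd.dist measurable_fst.fst)
      (measurable_fst.fst.dist measurable_fst.snd))

theorem ENNReal.mul_rpow_sub_one_le_of_mul_le {D B V κ : ℝ≥0∞} {β : ℝ} (hβ : β ≤ 1) (hD₀ : D ≠ 0)
    (hD : D ≠ ⊤) (hB₀ : B ≠ 0) (hB : B ≠ ⊤) (h : D * B ≤ κ * V) :
    D * V ^ (β - 1) ≤ D ^ β * κ ^ (1 - β) * B ^ (β - 1) := by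
  have hDV : D * V⁻¹ ≤ κ * B⁻¹ :=
    calc D * V⁻¹ = D * B * V⁻¹ * B⁻¹ := by
          rw [mul_right_comm D B, mul_assoc (D * V⁻¹), ENNReal.mul_inv_cancel hB₀ hB, mul_one]
      _ ≤ κ * V * V⁻¹ * B⁻¹ := by gcongr
      _ ≤ κ * B⁻¹ := by
          gcongr
          rw [mul_assoc]
          exact mul_le_of_le_one_right' (ENNReal.mul_inv_le_one V)
  have hneg : ∀ W : ℝ≥0∞, W ^ (β - 1) = W⁻¹ ^ (1 - β) := fun W => by
    rw [ENNReal.inv_rpow, ← ENNReal.rpow_neg, neg_sub]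
  calc D * V ^ (β - 1) = D ^ β * (D * V⁻¹) ^ (1 - β) := by
        rw [ENNReal.mul_rpow_of_nonneg _ _ (by linarith), ← mul_assoc,
          ← ENNReal.rpow_add _ _ hD₀ hD, add_sub_cancel, ENNReal.rpow_one, hneg]
    _ ≤ D ^ β * (κ * B⁻¹) ^ (1 - β) := by gcongr
    _ = D ^ β * κ ^ (1 - β) * B ^ (β - 1) := by
        rw [ENNReal.mul_rpow_of_nonneg _ _ (by linarith), hneg, mul_assoc]

section SingularIntegral

variable {E : Type*} [NormedAddCommGroup E] [MeasurableSpace E] [BorelSpace E]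
  (μ : Measure E) [μ.IsAddHaarMeasure]

theorem setLIntegral_measure_ball_dist_rpow_eq (y : E) (a β : ℝ) :
    ∫⁻ x in ball y a, μ (ball x (dist x y)) ^ (β - 1) ∂μ
      = ∫⁻ z in ball 0 a, μ (ball 0 ‖z‖) ^ (β - 1) ∂μ := by
  have hpre : (· - y) ⁻¹' ball (0 : E) a = ball y a := by
    ext x; simp [dist_eq_norm]
  rw [← (measurePreserving_sub_right μ y).setLIntegral_comp_preimage_emb
    (measurableEmbedding_subRight y) (fun z => μ (ball 0 ‖z‖) ^ (β - 1)) (ball 0 a), hpre]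
  refine setLIntegral_congr_fun measurableSet_ball fun x _ => ?_
  rw [Measure.addHaar_ball_center, dist_eq_norm]

theorem setLIntegral_measure_ball_norm_rpow_lt_top [NormedSpace ℝ E] [FiniteDimensional ℝ E]
    [Nontrivial E] {β : ℝ} (hβ : 0 < β) (a : ℝ) :
    ∫⁻ z in ball 0 a, μ (ball (0 : E) ‖z‖) ^ (β - 1) ∂μ < ⊤ := by
  set d := Module.finrank ℝ E
  set q : ℝ := d * (β - 1)
  have hd : 1 ≤ d := Module.finrank_pos
  have hint : IntegrableOn (fun z : E => ‖z‖ ^ q) (ball 0 a) μ := by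
    refine integrableOn_ball_of_norm_le_rpow hd (C := 1) (α := -q) ?_ ?_
      (measurable_norm.pow_const q).aestronglyMeasurable
    · have : (1 : ℝ) ≤ d := by exact_mod_cast hd
      simp only [q]; nlinarith
    · refine ae_of_all _ fun z => ?_
      rw [neg_neg, one_mul, Real.norm_of_nonneg (by positivity)]
  have hB₀ : μ (ball (0 : E) 1) ≠ 0 := (measure_ball_pos μ 0 one_pos).ne'
  have hB : μ (ball (0 : E) 1) ^ (β - 1) ≠ ⊤ :=
    ENNReal.rpow_ne_top_of_ne_zero hB₀ measure_ball_lt_top.ne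
  have hpt : ∀ z : E, z ≠ 0 →
      μ (ball (0 : E) ‖z‖) ^ (β - 1) = μ (ball (0 : E) 1) ^ (β - 1) * ENNReal.ofReal (‖z‖ ^ q) := by
    intro z hz
    have hz' : 0 < ‖z‖ := norm_pos_iff.2 hz
    rw [Measure.addHaar_ball_of_pos μ _ hz', ENNReal.mul_rpow_of_ne_zero
      (ENNReal.ofReal_pos.2 (pow_pos hz' d)).ne' hB₀, ENNReal.ofReal_rpow_of_pos (by positivity),
      ← Real.rpow_natCast, ← Real.rpow_mul hz'.le, mul_comm]
  calc ∫⁻ z in ball 0 a, μ (ball (0 : E) ‖z‖) ^ (β - 1) ∂μ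
      = ∫⁻ z in ball 0 a, μ (ball (0 : E) 1) ^ (β - 1) * ENNReal.ofReal (‖z‖ ^ q) ∂μ :=
        setLIntegral_congr_fun_ae measurableSet_ball <|
          (μ.ae_ne 0).mono fun z hz _ => hpt z hz
    _ = μ (ball (0 : E) 1) ^ (β - 1) * ∫⁻ z in ball 0 a, ENNReal.ofReal (‖z‖ ^ q) ∂μ :=
        lintegral_const_mul' _ _ hB
    _ < ⊤ := ENNReal.mul_lt_top hB.lt_top hint.lintegral_lt_top

end SingularIntegral

section GaussMeasure

variable {n : ℕ}

theorem mfun_le_one (x : EuclideanSpace ℝ (Fin n)) : mfun x ≤ 1 := min_le_left _ _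

theorem mfun_mul_norm_le_one (x : EuclideanSpace ℝ (Fin n)) : mfun x * ‖x‖ ≤ 1 :=
  (mul_le_mul_of_nonneg_right (min_le_right _ _) (norm_nonneg x)).trans inv_mul_le_one

theorem measurable_mfun : Measurable (mfun (n := n)) :=
  measurable_const.min measurable_norm.inv

theorem sq_norm_le_of_dist_lt_mul_mfun {a : ℝ} (ha : 0 ≤ a) {x z : EuclideanSpace ℝ (Fin n)}
    (hz : dist z x < a * mfun x) : ‖z‖ ^ 2 ≤ ‖x‖ ^ 2 + (2 * a + a ^ 2) := by
  have hza : dist z x ≤ a := hz.le.trans (mul_le_of_le_one_right ha (mfun_le_one x))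
  have hzx : dist z x * ‖x‖ ≤ a := by
    calc dist z x * ‖x‖ ≤ a * mfun x * ‖x‖ := by gcongr
      _ ≤ a := by rw [mul_assoc]; exact mul_le_of_le_one_right ha (mfun_mul_norm_le_one x)
  have hz' : ‖z‖ ≤ dist z x + ‖x‖ := by simpa using dist_triangle z x 0
  nlinarith [norm_nonneg z, dist_nonneg (x := z) (y := x)]

noncomputable def gaussDensity (n : ℕ) (x : EuclideanSpace ℝ (Fin n)) : ℝ :=
  π ^ (-(n : ℝ) / 2) * exp (-‖x‖ ^ 2)

theorem gauss_eq_withDensity (n : ℕ) :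
    gauss n = volume.withDensity fun x => ENNReal.ofReal (gaussDensity n x) := rfl

theorem measurable_gaussDensity : Measurable (gaussDensity n) := by
  unfold gaussDensity; fun_prop

theorem gaussDensity_pos (x : EuclideanSpace ℝ (Fin n)) : 0 < gaussDensity n x := by
  unfold gaussDensity; positivity

theorem gaussDensity_le (x : EuclideanSpace ℝ (Fin n)) : gaussDensity n x ≤ π ^ (-(n : ℝ) / 2) :=
  mul_le_of_le_one_right (by positivity) (exp_le_one_iff.2 (neg_nonpos.2 (sq_nonneg _)))

theorem integral_gaussDensity (n : ℕ) : ∫ x, gaussDensity n x = 1 := by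
  have h := GaussianFourier.integral_rexp_neg_mul_sq_norm
    (V := EuclideanSpace ℝ (Fin n)) one_pos
  simp only [neg_mul, one_mul, div_one, finrank_euclideanSpace_fin] at h
  simp only [gaussDensity, integral_const_mul, h, ← rpow_add pi_pos, neg_div, neg_add_cancel,
    Real.rpow_zero]

instance isProbabilityMeasure_gauss (n : ℕ) : IsProbabilityMeasure (gauss n) := by
  constructor
  have hint : Integrable (gaussDensity n) := by
    refine Integrable.of_integral_ne_zero ?_
    rw [integral_gaussDensity]; exact one_ne_zero
  rw [gauss_eq_withDensity, withDensity_apply _ MeasurableSet.univ, Measure.restrict_univ,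
    ← ofReal_integral_eq_lintegral_ofReal hint (ae_of_all _ fun x => (gaussDensity_pos x).le),
    integral_gaussDensity, ENNReal.ofReal_one]

theorem gaussDensity_le_mul_of_dist_lt_mul_mfun {a : ℝ} (ha : 0 ≤ a)
    {x z : EuclideanSpace ℝ (Fin n)} (hz : dist z x < a * mfun x) :
    gaussDensity n x ≤ exp (2 * a + a ^ 2) * gaussDensity n z := by
  have hzx := sq_norm_le_of_dist_lt_mul_mfun ha hz
  rw [gaussDensity, gaussDensity, mul_left_comm, ← exp_add]
  gcongr
  linarith

theorem gaussDensity_mul_volume_ball_le {a r : ℝ} (ha : 0 ≤ a) {x : EuclideanSpace ℝ (Fin n)}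
    (hr : r ≤ a * mfun x) :
    ENNReal.ofReal (gaussDensity n x) * volume (ball x r)
      ≤ ENNReal.ofReal (exp (2 * a + a ^ 2)) * gauss n (ball x r) := by
  rw [gauss_eq_withDensity, withDensity_apply _ measurableSet_ball, ← lintegral_const_mul' _ _
    ofReal_ne_top, ← setLIntegral_const]
  refine setLIntegral_mono' measurableSet_ball fun z hz => ?_
  rw [← ENNReal.ofReal_mul (exp_pos _).le]
  exact ENNReal.ofReal_le_ofReal
    (gaussDensity_le_mul_of_dist_lt_mul_mfun ha ((mem_ball.1 hz).trans_le hr))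

noncomputable def localKernel (n : ℕ) (a β : ℝ) (x y : EuclideanSpace ℝ (Fin n)) : ℝ≥0∞ :=
  (ball x (a * mfun x)).indicator (fun y => gauss n (ball x (dist x y)) ^ (β - 1)) y

theorem fracInt_eq_lintegral_localKernel (a β : ℝ) (f : EuclideanSpace ℝ (Fin n) → ℝ)
    (x : EuclideanSpace ℝ (Fin n)) :
    fracInt n a β f x = ∫⁻ y, ‖f y‖ₑ * localKernel n a β x y ∂gauss n := by
  rw [fracInt, ← lintegral_indicator measurableSet_ball]
  simp only [localKernel, Set.indicator_mul_right]
  rfl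

theorem measurable_localKernel (a β : ℝ) : Measurable (Function.uncurry (localKernel n a β)) :=
  Measurable.ite (measurableSet_lt (measurable_snd.dist measurable_fst)
      (measurable_const.mul (measurable_mfun.comp measurable_fst)))
    ((measurable_measure_ball_dist_s13 (gauss n)).pow_const _) measurable_const

theorem gaussDensity_mul_localKernel_le {a β : ℝ} (ha : 0 ≤ a) (hβ : β ∈ Set.Icc (0 : ℝ) 1)
    {x y : EuclideanSpace ℝ (Fin n)} (hxy : x ≠ y) :
    ENNReal.ofReal (gaussDensity n x) * localKernel n a β x y
      ≤ ENNReal.ofReal (π ^ (-(n : ℝ) / 2)) ^ β * ENNReal.ofReal (exp (2 * a + a ^ 2)) ^ (1 - β)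
        * (ball y a).indicator (fun x => volume (ball x (dist x y)) ^ (β - 1)) x := by
  by_cases hy : y ∈ ball x (a * mfun x)
  swap
  · simp [localKernel, hy]
  have hr : dist y x < a * mfun x := mem_ball.1 hy
  have hx : x ∈ ball y a :=
    mem_ball'.2 (hr.trans_le (mul_le_of_le_one_right ha (mfun_le_one x)))
  rw [localKernel, Set.indicator_of_mem hy, Set.indicator_of_mem hx]
  calc _ ≤ ENNReal.ofReal (gaussDensity n x) ^ β * ENNReal.ofReal (exp (2 * a + a ^ 2)) ^ (1 - β)
        * volume (ball x (dist x y)) ^ (β - 1) :=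
        ENNReal.mul_rpow_sub_one_le_of_mul_le hβ.2 (ENNReal.ofReal_pos.2 (gaussDensity_pos x)).ne'
          ofReal_ne_top (measure_ball_pos _ _ (dist_pos.2 hxy)).ne' measure_ball_lt_top.ne
          (gaussDensity_mul_volume_ball_le ha (dist_comm x y ▸ hr.le))
    _ ≤ _ := by
        gcongr
        · exact hβ.1
        · exact gaussDensity_le x

theorem exists_lintegral_localKernel_le (hn : 0 < n) {a β : ℝ} (ha : 0 ≤ a)
    (hβ : β ∈ Set.Ioo (0 : ℝ) 1) :
    ∃ K : ℝ≥0∞, K ≠ ⊤ ∧ ∀ y, ∫⁻ x, localKernel n a β x y ∂gauss n ≤ K := by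
  have : NeZero n := ⟨hn.ne'⟩
  set c : ℝ≥0∞ :=
    ENNReal.ofReal (π ^ (-(n : ℝ) / 2)) ^ β * ENNReal.ofReal (exp (2 * a + a ^ 2)) ^ (1 - β)
  have hc : c ≠ ⊤ := mul_ne_top (rpow_ne_top_of_nonneg hβ.1.le ofReal_ne_top)
    (rpow_ne_top_of_nonneg (by linarith [hβ.2]) ofReal_ne_top)
  refine ⟨c * ∫⁻ z in ball 0 a, volume (ball (0 : EuclideanSpace ℝ (Fin n)) ‖z‖) ^ (β - 1),
    mul_ne_top hc (setLIntegral_measure_ball_norm_rpow_lt_top volume hβ.1 a).ne, fun y => ?_⟩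
  rw [gauss_eq_withDensity, lintegral_withDensity_eq_lintegral_mul _
    measurable_gaussDensity.ennreal_ofReal (measurable_localKernel a β).of_uncurry_right]
  calc _ ≤ ∫⁻ x, c * (ball y a).indicator (fun x => volume (ball x (dist x y)) ^ (β - 1)) x :=
        lintegral_mono_ae <| (volume.ae_ne y).mono fun x hx =>
          gaussDensity_mul_localKernel_le ha ⟨hβ.1.le, hβ.2.le⟩ hx
    _ = _ := by
        rw [lintegral_const_mul' _ _ hc, lintegral_indicator measurableSet_ball,
          setLIntegral_measure_ball_dist_rpow_eq]

/-- `m(0) = min 1 0⁻¹ = 0` in Lean, so in `ℝ⁰ = {0}` every ball `B(x, a m(x))` is empty. -/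
theorem fracInt_of_dim_zero (a β : ℝ) (f : EuclideanSpace ℝ (Fin 0) → ℝ)
    (x : EuclideanSpace ℝ (Fin 0)) : fracInt 0 a β f x = 0 := by
  simp [fracInt, mfun, Subsingleton.elim x 0]

end GaussMeasure

theorem stmt13 (n : ℕ) (a β : ℝ) (ha : 0 < a) (hβ : β ∈ Set.Ioo (0 : ℝ) 1) :
    ∃ C : ℝ, 0 < C ∧
      ∀ f : EuclideanSpace ℝ (Fin n) → ℝ,
        MemLp f (ENNReal.ofReal (1 / β)) (gauss n) →
        ∫⁻ x, fracInt n a β f x ∂gauss n ≤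
          ENNReal.ofReal C * eLpNorm f (ENNReal.ofReal (1 / β)) (gauss n) := by
  obtain rfl | hn := n.eq_zero_or_pos
  · exact ⟨1, one_pos, fun f _ => by simp [fracInt_of_dim_zero]⟩
  obtain ⟨K, hK, hbound⟩ := exists_lintegral_localKernel_le hn ha.le hβ
  have hp : (1 : ℝ≥0∞) ≤ ENNReal.ofReal (1 / β) := by
    rw [ENNReal.one_le_ofReal, le_div_iff₀ hβ.1, one_mul]; exact hβ.2.le
  refine ⟨K.toReal + 1, by positivity, fun f hf => ?_⟩
  calc ∫⁻ x, fracInt n a β f x ∂gauss n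
      = ∫⁻ x, ∫⁻ y, ‖f y‖ₑ * localKernel n a β x y ∂gauss n ∂gauss n := by
        simp_rw [fracInt_eq_lintegral_localKernel]
    _ ≤ K * eLpNorm f 1 (gauss n) := by
        rw [eLpNorm_one_eq_lintegral_enorm]
        exact lintegral_lintegral_mul_le_of_lintegral_le (measurable_localKernel a β)
          hf.1.enorm hbound
    _ ≤ ENNReal.ofReal (K.toReal + 1) * eLpNorm f (ENNReal.ofReal (1 / β)) (gauss n) := by
        gcongr
        · rw [ENNReal.le_ofReal_iff_toReal_le hK (by positivity)]; linarith
        · exact eLpNorm_le_eLpNorm_of_exponent_le hp hf.1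
end
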